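/- arXiv:2308.10316 — 8 statements merged into one kernel-verified Lean document; each statement's English description precedes it below -/
import Mathlib

section
/- Suppose there are n ≥ 2 experts, T ≥ log n rounds, ν ∈ [0,1], and η = √(log n / T). Let (Z^(t)_i) for t ∈ {1,…,T}, i ∈ {1,…,n} be independent centered Gaussian random variables of variance ν², and for each t let m^(t) be a measurable function of Z^(1),…,Z^(t−1) taking values in [−1,1]^n. Run Hedge with step size η on the noisy losses m̂^(t) = m^(t) + Z^(t), producing distributions p^(1),…,p^(T). Then for every expert i, E[Σ_{t=1}^T ⟨m^(t), p^(t)⟩] ≤ E[Σ_{t=1}^T m^(t)_i] + 4·√(T·log n). -/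
open scoped Classical
open MeasureTheory ProbabilityTheory

/-- Hedge weights with step size `η` on loss sequence `loss`:
`w⁽⁰⁾ᵢ = 1`, `w⁽ᵗ⁺¹⁾ᵢ = w⁽ᵗ⁾ᵢ · exp (−η · lossᵗᵢ)`. -/
noncomputable def hedgeW {n : ℕ} (η : ℝ) (loss : ℕ → Fin n → ℝ) : ℕ → Fin n → ℝ
  | 0 => fun _ => 1
  | t + 1 => fun i => hedgeW η loss t i * Real.exp (-η * loss t i)

/-- The distribution played by Hedge in round `t`. -/
noncomputable def hedgeP {n : ℕ} (η : ℝ) (loss : ℕ → Fin n → ℝ) (t : ℕ) (i : Fin n) : ℝ :=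
  hedgeW η loss t i / ∑ j, hedgeW η loss t j

/-!
Potential argument. With `W t = ∑ j, hedgeW η m̂ t j`, the weights telescope to
`log W T = log n + ∑ₜ log (∑ j, p⁽ᵗ⁾ⱼ exp (-η m̂⁽ᵗ⁾ⱼ))`, and `log W T ≥ -η ∑ₜ m̂⁽ᵗ⁾ᵢ`.
Tilting `p⁽ᵗ⁾` by `exp (-η m⁽ᵗ⁾)` splits each round's term into
`log ∑ j, p⁽ᵗ⁾ⱼ exp (-η m⁽ᵗ⁾ⱼ) ≤ η² - η ⟨m⁽ᵗ⁾, p⁽ᵗ⁾⟩` (Hoeffding, as `|η m⁽ᵗ⁾ⱼ| ≤ 1`) and a noise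
term `log ∑ j, rⱼ exp (-η Z⁽ᵗ⁾ⱼ)`. The tilted distribution `r` is a function of the earlier noise,
hence independent of `Z⁽ᵗ⁾`, so the noise term has expectation at most
`log E[exp (-η Z)] = η²ν²/2`. Taking expectations (`E Z = 0`) and summing over rounds gives
`η · E[regret] ≤ log n + T η² (1 + ν²/2)`, and `η = √(log n / T)` makes the regret at most
`(5/2) √(T log n)`.
-/

open Real Finset

section ExpMixture

variable {ι : Type*} [Fintype ι] {q : ι → ℝ}

theorem sum_mul_exp_pos (hq : q ∈ stdSimplex ℝ ι) (a : ι → ℝ) : 0 < ∑ j, q j * exp (a j) := by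
  obtain ⟨j, -, hj⟩ := exists_lt_of_sum_lt (s := univ) (f := fun _ => 0) (g := q) (by simp [hq.2])
  exact sum_pos' (fun k _ => mul_nonneg (hq.1 k) (exp_pos _).le)
    ⟨j, mem_univ j, mul_pos hj (exp_pos _)⟩

theorem abs_log_sum_mul_exp_le (hq : q ∈ stdSimplex ℝ ι) (a : ι → ℝ) :
    |log (∑ j, q j * exp (a j))| ≤ ∑ j, |a j| := by
  have ha : ∀ j, |a j| ≤ ∑ k, |a k| := fun j =>
    single_le_sum (f := fun k => |a k|) (fun k _ => abs_nonneg _) (mem_univ j)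
  have hconst : ∀ b, ∑ j, q j * exp b = exp b := fun b => by rw [← sum_mul, hq.2, one_mul]
  have hpos := sum_mul_exp_pos hq a
  rw [abs_le, le_log_iff_exp_le hpos, log_le_iff_le_exp hpos]
  constructor
  · rw [← hconst]
    exact sum_le_sum fun j _ => mul_le_mul_of_nonneg_left
      (exp_le_exp.2 (by linarith [neg_abs_le (a j), ha j])) (hq.1 j)
  · rw [← hconst]
    exact sum_le_sum fun j _ => mul_le_mul_of_nonneg_left
      (exp_le_exp.2 ((le_abs_self _).trans (ha j))) (hq.1 j)

theorem log_sum_mul_exp_neg_mul_le (hq : q ∈ stdSimplex ℝ ι) {c : ι → ℝ}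
    (hc : ∀ j, |c j| ≤ 1) {η : ℝ} (hη0 : 0 ≤ η) (hη1 : η ≤ 1) :
    log (∑ j, q j * exp (-η * c j)) ≤ η ^ 2 - η * ∑ j, c j * q j := by
  have hexp : ∀ j, exp (-η * c j) ≤ 1 - η * c j + η ^ 2 := fun j => by
    have hx : |-η * c j| ≤ 1 := by
      rw [abs_mul, abs_neg, abs_of_nonneg hη0]
      nlinarith [hc j, abs_nonneg (c j)]
    have h := (abs_le.1 (abs_exp_sub_one_sub_id_le hx)).2
    have hc2 : (c j) ^ 2 ≤ 1 := by nlinarith [hc j, abs_nonneg (c j), sq_abs (c j)]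
    nlinarith [sq_nonneg η]
  calc log (∑ j, q j * exp (-η * c j))
      ≤ ∑ j, q j * exp (-η * c j) - 1 := log_le_sub_one_of_pos (sum_mul_exp_pos hq _)
    _ ≤ ∑ j, q j * (1 - η * c j + η ^ 2) - 1 :=
      sub_le_sub_right (sum_le_sum fun j _ => mul_le_mul_of_nonneg_left (hexp j) (hq.1 j)) 1
    _ = (1 + η ^ 2) * ∑ j, q j - η * ∑ j, c j * q j - 1 := by
      rw [mul_sum, mul_sum, ← sum_sub_distrib]
      exact congrArg (· - 1) (sum_congr rfl fun j _ => by ring)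
    _ = η ^ 2 - η * ∑ j, c j * q j := by rw [hq.2]; ring

end ExpMixture

section Hedge

variable {n : ℕ} {η : ℝ} {loss : ℕ → Fin n → ℝ}

theorem hedgeW_eq_exp (t : ℕ) (i : Fin n) :
    hedgeW η loss t i = exp (-η * ∑ s ∈ range t, loss s i) := by
  induction t with
  | zero => simp [hedgeW]
  | succ t ih => simp only [hedgeW, ih, sum_range_succ, mul_add, exp_add]

theorem hedgeW_pos (t : ℕ) (i : Fin n) : 0 < hedgeW η loss t i := by
  rw [hedgeW_eq_exp]; exact exp_pos _

theorem sum_hedgeW_pos [NeZero n] (t : ℕ) : 0 < ∑ j, hedgeW η loss t j :=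
  sum_pos (fun j _ => hedgeW_pos t j) univ_nonempty

theorem hedgeP_mem_stdSimplex [NeZero n] (t : ℕ) : hedgeP η loss t ∈ stdSimplex ℝ (Fin n) :=
  ⟨fun j => div_nonneg (hedgeW_pos t j).le (sum_hedgeW_pos t).le,
    by simp only [hedgeP, ← sum_div, div_self (sum_hedgeW_pos t).ne']⟩

theorem sum_hedgeW_succ [NeZero n] (t : ℕ) :
    ∑ j, hedgeW η loss (t + 1) j =
      (∑ j, hedgeW η loss t j) * ∑ j, hedgeP η loss t j * exp (-η * loss t j) := by
  simp only [hedgeW, hedgeP, mul_sum]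
  refine sum_congr rfl fun j _ => ?_
  field_simp [(sum_hedgeW_pos (η := η) (loss := loss) t).ne']

theorem neg_mul_sum_le_log_card_add_sum_log (t : ℕ) (i : Fin n) :
    -η * ∑ s ∈ range t, loss s i ≤
      log n + ∑ s ∈ range t, log (∑ j, hedgeP η loss s j * exp (-η * loss s j)) := by
  have : NeZero n := ⟨i.pos.ne'⟩
  have hlog_total : ∀ k, log (∑ j, hedgeW η loss k j) =
      log n + ∑ s ∈ range k, log (∑ j, hedgeP η loss s j * exp (-η * loss s j)) := by
    intro k
    induction k with
    | zero => simp [hedgeW]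
    | succ k ih =>
      have hmix := sum_mul_exp_pos (hedgeP_mem_stdSimplex (η := η) (loss := loss) k)
        fun j => -η * loss k j
      rw [sum_hedgeW_succ, log_mul (sum_hedgeW_pos k).ne' hmix.ne', ih, sum_range_succ,
        add_assoc]
  rw [← hlog_total, ← log_exp (-η * _), ← hedgeW_eq_exp]
  exact log_le_log (hedgeW_pos t i) (single_le_sum (fun j _ => (hedgeW_pos t j).le) (mem_univ i))

end Hedge

section Measurability

variable {n : ℕ} {α : Type*} {mα : MeasurableSpace α} {η : ℝ} {loss : α → ℕ → Fin n → ℝ}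
  {t : ℕ}

theorem measurable_hedgeW (h : ∀ s < t, ∀ j, Measurable fun a => loss a s j) (j : Fin n) :
    Measurable fun a => hedgeW η (loss a) t j := by
  induction t with
  | zero => exact measurable_const
  | succ t ih =>
    exact (ih fun s hs => h s (hs.trans t.lt_succ_self)).mul
      ((h t t.lt_succ_self j).const_mul (-η)).exp

theorem measurable_hedgeP (h : ∀ s < t, ∀ j, Measurable fun a => loss a s j) (j : Fin n) :
    Measurable fun a => hedgeP η (loss a) t j :=
  (measurable_hedgeW h j).div (Finset.measurable_sum _ fun k _ => measurable_hedgeW h k)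

end Measurability

section Noise

variable {ι Ω : Type*} [Fintype ι] {m mΩ : MeasurableSpace Ω} {μ : Measure Ω}

theorem integrable_log_sum_mul_exp {q a : Ω → ι → ℝ} (hq : ∀ j, Measurable fun ω => q ω j)
    (hqΔ : ∀ ω, q ω ∈ stdSimplex ℝ ι) (ha : ∀ j, Measurable fun ω => a ω j)
    (ha_int : ∀ j, Integrable (fun ω => a ω j) μ) :
    Integrable (fun ω => log (∑ j, q ω j * exp (a ω j))) μ :=
  (integrable_finsetSum univ fun j _ => (ha_int j).abs).mono'
    (measurable_log.comp (Finset.measurable_sum _ fun j _ =>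
      (hq j).mul (ha j).exp)).aestronglyMeasurable
    (ae_of_all _ fun ω => by
      simpa only [norm_eq_abs] using abs_log_sum_mul_exp_le (hqΔ ω) (a ω))

theorem integrable_sum_mul_of_mem_stdSimplex {q f : Ω → ι → ℝ}
    (hq : ∀ j, Measurable fun ω => q ω j) (hqΔ : ∀ ω, q ω ∈ stdSimplex ℝ ι)
    (hf : ∀ j, Integrable (fun ω => f ω j) μ) :
    Integrable (fun ω => ∑ j, f ω j * q ω j) μ :=
  integrable_finsetSum _ fun j _ => (hf j).mul_bdd (hq j).aestronglyMeasurable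
    (ae_of_all _ fun ω => by
      rw [norm_eq_abs, abs_of_nonneg ((hqΔ ω).1 j)]
      exact (mem_Icc_of_mem_stdSimplex (hqΔ ω) j).2)

-- `log x ≤ c + exp (-c) * x - 1`, and by independence `exp (-c) * x` has expectation `1`.
theorem integral_log_sum_mul_exp_le [IsProbabilityMeasure μ] (hm : m ≤ mΩ) {r : Ω → ι → ℝ}
    (hr : ∀ j, Measurable[m] fun ω => r ω j) (hrΔ : ∀ ω, r ω ∈ stdSimplex ℝ ι)
    {Z : ι → Ω → ℝ} (hZ : ∀ j, Measurable (Z j)) (hZ_int : ∀ j, Integrable (Z j) μ)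
    (hindep : ∀ j, Indep m (MeasurableSpace.comap (Z j) inferInstance) μ) {t c : ℝ}
    (hmgf : ∀ j, mgf (Z j) μ t = exp c) :
    ∫ ω, log (∑ j, r ω j * exp (t * Z j ω)) ∂μ ≤ c := by
  have hr' : ∀ j, Measurable fun ω => r ω j := fun j => (hr j).mono hm le_rfl
  have hexp_int : ∀ j, Integrable (fun ω => exp (t * Z j ω)) μ := fun j =>
    mgf_pos_iff.1 (by rw [hmgf]; exact exp_pos c)
  have hr_norm : ∀ j, ∀ᵐ ω ∂μ, ‖r ω j‖ ≤ 1 := fun j => ae_of_all _ fun ω => by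
    rw [norm_eq_abs, abs_of_nonneg ((hrΔ ω).1 j)]
    exact (mem_Icc_of_mem_stdSimplex (hrΔ ω) j).2
  have hr_int : ∀ j, Integrable (fun ω => r ω j) μ := fun j =>
    .of_bound (hr' j).aestronglyMeasurable 1 (hr_norm j)
  have hterm_int : ∀ j, Integrable (fun ω => r ω j * exp (t * Z j ω)) μ := fun j =>
    (hexp_int j).bdd_mul (hr' j).aestronglyMeasurable (hr_norm j)
  have hsum_int := integrable_finsetSum univ fun j _ => hterm_int j
  have hbound_int : Integrable (fun ω => c + exp (-c) * ∑ j, r ω j * exp (t * Z j ω)) μ :=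
    (integrable_const c).add (hsum_int.const_mul _)
  have hterm : ∀ j, ∫ ω, r ω j * exp (t * Z j ω) ∂μ = (∫ ω, r ω j ∂μ) * exp c := by
    intro j
    have hind : IndepFun (fun ω => r ω j) (fun ω => exp (t * Z j ω)) μ :=
      ((IndepFun_iff_Indep _ _ _).2 (indep_of_indep_of_le_left (hindep j) (hr j).comap_le)).comp
        measurable_id (by fun_prop : Measurable fun x => exp (t * x))
    rw [hind.integral_fun_mul_eq_mul_integral (hr' j).aestronglyMeasurable
      (hexp_int j).aestronglyMeasurable, ← hmgf j, mgf]
  have hmean : ∫ ω, ∑ j, r ω j * exp (t * Z j ω) ∂μ = exp c := by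
    rw [integral_finsetSum _ fun j _ => hterm_int j, sum_congr rfl fun j _ => hterm j, ← sum_mul,
      ← integral_finsetSum _ fun j _ => hr_int j]
    simp [fun ω => (hrΔ ω).2]
  have hpoint : ∀ ω, log (∑ j, r ω j * exp (t * Z j ω)) ≤
      c + exp (-c) * ∑ j, r ω j * exp (t * Z j ω) - 1 := fun ω => by
    have hpos := sum_mul_exp_pos (hrΔ ω) fun j => t * Z j ω
    have := log_le_sub_one_of_pos (mul_pos (exp_pos (-c)) hpos)
    rw [log_mul (exp_pos _).ne' hpos.ne', log_exp] at this
    linarith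
  calc ∫ ω, log (∑ j, r ω j * exp (t * Z j ω)) ∂μ
      ≤ ∫ ω, (c + exp (-c) * ∑ j, r ω j * exp (t * Z j ω) - 1) ∂μ :=
        integral_mono (integrable_log_sum_mul_exp hr' hrΔ
          (fun j => measurable_const.mul (hZ j)) fun j => (hZ_int j).const_mul t)
          (hbound_int.sub (integrable_const 1)) hpoint
    _ = c := by
      rw [integral_sub hbound_int (integrable_const 1),
        integral_add (integrable_const c) (hsum_int.const_mul _), integral_const_mul, hmean]
      simp [← exp_add]

end Noise

section Round

variable {ι Ω : Type*} [Fintype ι] {m mΩ : MeasurableSpace Ω} {μ : Measure Ω}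

theorem integral_log_sum_mul_exp_neg_mul_add_le [IsProbabilityMeasure μ] (hm : m ≤ mΩ)
    {q f : Ω → ι → ℝ} (hq : ∀ j, Measurable[m] fun ω => q ω j)
    (hf : ∀ j, Measurable[m] fun ω => f ω j) (hqΔ : ∀ ω, q ω ∈ stdSimplex ℝ ι)
    (hf1 : ∀ ω j, |f ω j| ≤ 1) {η : ℝ} (hη0 : 0 ≤ η) (hη1 : η ≤ 1)
    {Z : ι → Ω → ℝ} (hZ : ∀ j, Measurable (Z j)) (hZ_int : ∀ j, Integrable (Z j) μ)
    (hindep : ∀ j, Indep m (MeasurableSpace.comap (Z j) inferInstance) μ) {c : ℝ}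
    (hmgf : ∀ j, mgf (Z j) μ (-η) = exp c) :
    ∫ ω, log (∑ j, q ω j * exp (-η * (f ω j + Z j ω))) ∂μ ≤
      η ^ 2 + c - η * ∫ ω, ∑ j, f ω j * q ω j ∂μ := by
  have hq' : ∀ j, Measurable fun ω => q ω j := fun j => (hq j).mono hm le_rfl
  have hf' : ∀ j, Measurable fun ω => f ω j := fun j => (hf j).mono hm le_rfl
  have hf_int : ∀ j, Integrable (fun ω => f ω j) μ := fun j =>
    .of_bound (hf' j).aestronglyMeasurable 1 (ae_of_all _ fun ω => hf1 ω j)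
  set B : Ω → ℝ := fun ω => ∑ j, q ω j * exp (-η * f ω j)
  have hB : ∀ ω, 0 < B ω := fun ω => sum_mul_exp_pos (hqΔ ω) _
  set r : Ω → ι → ℝ := fun ω j => q ω j * exp (-η * f ω j) / B ω
  have hr : ∀ j, Measurable[m] fun ω => r ω j := fun j =>
    ((hq j).mul ((hf j).const_mul _).exp).div
      (Finset.measurable_sum _ fun k _ => (hq k).mul ((hf k).const_mul _).exp)
  have hrΔ : ∀ ω, r ω ∈ stdSimplex ℝ ι := fun ω =>
    ⟨fun j => div_nonneg (mul_nonneg ((hqΔ ω).1 j) (exp_pos _).le) (hB ω).le,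
      by simp only [r, ← sum_div]; exact div_self (hB ω).ne'⟩
  have hsplit : ∀ ω, log (∑ j, q ω j * exp (-η * (f ω j + Z j ω))) =
      log (B ω) + log (∑ j, r ω j * exp (-η * Z j ω)) := fun ω => by
    rw [← log_mul (hB ω).ne' (sum_mul_exp_pos (hrΔ ω) _).ne', mul_sum]
    refine congrArg log (sum_congr rfl fun j _ => ?_)
    simp only [r, mul_add, exp_add]
    field_simp [(hB ω).ne']
  have hlogB_int : Integrable (fun ω => log (B ω)) μ :=
    integrable_log_sum_mul_exp hq' hqΔ (fun j => (hf' j).const_mul _)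
      fun j => (hf_int j).const_mul _
  have hnoise_int : Integrable (fun ω => log (∑ j, r ω j * exp (-η * Z j ω))) μ :=
    integrable_log_sum_mul_exp (fun j => (hr j).mono hm le_rfl) hrΔ
      (fun j => (hZ j).const_mul _) fun j => (hZ_int j).const_mul _
  have hfq_int := integrable_sum_mul_of_mem_stdSimplex hq' hqΔ hf_int
  calc ∫ ω, log (∑ j, q ω j * exp (-η * (f ω j + Z j ω))) ∂μ
      = ∫ ω, log (B ω) ∂μ + ∫ ω, log (∑ j, r ω j * exp (-η * Z j ω)) ∂μ := by
        simp_rw [hsplit]; exact integral_add hlogB_int hnoise_int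
    _ ≤ ∫ ω, (η ^ 2 - η * ∑ j, f ω j * q ω j) ∂μ + c :=
        add_le_add (integral_mono hlogB_int ((integrable_const _).sub (hfq_int.const_mul η))
          fun ω => log_sum_mul_exp_neg_mul_le (hqΔ ω) (hf1 ω) hη0 hη1)
          (integral_log_sum_mul_exp_le hm hr hrΔ hZ hZ_int hindep hmgf)
    _ = η ^ 2 + c - η * ∫ ω, ∑ j, f ω j * q ω j ∂μ := by
        rw [integral_sub (integrable_const _) (hfq_int.const_mul η), integral_const,
          integral_const_mul]
        simp only [probReal_univ, smul_eq_mul, one_mul]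
        ring

end Round

section Regret

variable {Ω : Type*} {mΩ : MeasurableSpace Ω} {μ : Measure Ω}

theorem neg_mul_sum_integral_le_log_card_add_sum_integral_log [IsProbabilityMeasure μ]
    {n T : ℕ} {η : ℝ} {loss : Ω → ℕ → Fin n → ℝ} (i : Fin n)
    (hloss : ∀ t < T, Integrable (fun ω => loss ω t i) μ)
    (hlog : ∀ t < T, Integrable
      (fun ω => log (∑ j, hedgeP η (loss ω) t j * exp (-η * loss ω t j))) μ) :
    -η * ∑ t ∈ range T, ∫ ω, loss ω t i ∂μ ≤
      log n + ∑ t ∈ range T, ∫ ω, log (∑ j, hedgeP η (loss ω) t j * exp (-η * loss ω t j)) ∂μ := by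
  have hloss_sum := integrable_finsetSum (range T) fun t ht => hloss t (mem_range.1 ht)
  have hlog_sum := integrable_finsetSum (range T) fun t ht => hlog t (mem_range.1 ht)
  calc -η * ∑ t ∈ range T, ∫ ω, loss ω t i ∂μ
      = ∫ ω, -η * ∑ t ∈ range T, loss ω t i ∂μ := by
        rw [integral_const_mul, integral_finsetSum _ fun t ht => hloss t (mem_range.1 ht)]
    _ ≤ ∫ ω, (log n + ∑ t ∈ range T,
          log (∑ j, hedgeP η (loss ω) t j * exp (-η * loss ω t j))) ∂μ :=
        integral_mono (hloss_sum.const_mul _) ((integrable_const _).add hlog_sum)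
          fun ω => neg_mul_sum_le_log_card_add_sum_log T i
    _ = _ := by
        rw [integral_add (integrable_const _) hlog_sum, integral_const,
          integral_finsetSum _ fun t ht => hlog t (mem_range.1 ht)]
        simp

theorem hedge_noisy_regret_le_of_indep [IsProbabilityMeasure μ] {n T : ℕ}
    {𝓕 : ℕ → MeasurableSpace Ω} (h𝓕 : ∀ t, 𝓕 t ≤ mΩ) (h𝓕_mono : Monotone 𝓕)
    {Z : ℕ → Fin n → Ω → ℝ} (hZ : ∀ t < T, ∀ j, Measurable[𝓕 (t + 1)] (Z t j))
    (hZ_int : ∀ t < T, ∀ j, Integrable (Z t j) μ) (hZ_mean : ∀ t < T, ∀ j, ∫ ω, Z t j ω ∂μ = 0)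
    (hindep : ∀ t < T, ∀ j, Indep (𝓕 t) (MeasurableSpace.comap (Z t j) inferInstance) μ)
    {η c : ℝ} (hη0 : 0 ≤ η) (hη1 : η ≤ 1) (hmgf : ∀ t < T, ∀ j, mgf (Z t j) μ (-η) = exp c)
    {m : ℕ → Ω → Fin n → ℝ} (hm : ∀ t < T, ∀ j, Measurable[𝓕 t] fun ω => m t ω j)
    (hm1 : ∀ t < T, ∀ ω j, |m t ω j| ≤ 1) (i : Fin n) :
    η * ∫ ω, ∑ t ∈ range T, ∑ j, m t ω j * hedgeP η (fun s j => m s ω j + Z s j ω) t j ∂μ ≤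
      η * ∫ ω, ∑ t ∈ range T, m t ω i ∂μ + log n + T * (η ^ 2 + c) := by
  have : NeZero n := ⟨i.pos.ne'⟩
  set p : Ω → ℕ → Fin n → ℝ := fun ω => hedgeP η (fun s j => m s ω j + Z s j ω)
  set L : ℕ → Ω → ℝ := fun t ω => log (∑ j, p ω t j * exp (-η * (m t ω j + Z t j ω)))
  have hZ' : ∀ t < T, ∀ j, Measurable (Z t j) := fun t ht j => (hZ t ht j).mono (h𝓕 _) le_rfl
  have hm' : ∀ t < T, ∀ j, Measurable fun ω => m t ω j := fun t ht j =>
    (hm t ht j).mono (h𝓕 _) le_rfl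
  have hm_int : ∀ t < T, ∀ j, Integrable (fun ω => m t ω j) μ := fun t ht j =>
    .of_bound (hm' t ht j).aestronglyMeasurable 1 (ae_of_all _ fun ω => hm1 t ht ω j)
  have hp : ∀ t < T, ∀ j, Measurable[𝓕 t] fun ω => p ω t j := fun t ht =>
    measurable_hedgeP fun s hs j => ((hm s (hs.trans ht) j).mono (h𝓕_mono hs.le) le_rfl).add
      ((hZ s (hs.trans ht) j).mono (h𝓕_mono hs) le_rfl)
  have hround : ∀ t < T, ∫ ω, L t ω ∂μ ≤ η ^ 2 + c - η * ∫ ω, ∑ j, m t ω j * p ω t j ∂μ :=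
    fun t ht => integral_log_sum_mul_exp_neg_mul_add_le (h𝓕 t) (hp t ht) (hm t ht)
      (fun ω => hedgeP_mem_stdSimplex t) (hm1 t ht) hη0 hη1 (hZ' t ht) (hZ_int t ht)
      (hindep t ht) (hmgf t ht)
  have hL_int : ∀ t < T, Integrable (L t) μ := fun t ht =>
    integrable_log_sum_mul_exp (fun j => (hp t ht j).mono (h𝓕 t) le_rfl)
      (fun ω => hedgeP_mem_stdSimplex t) (fun j => ((hm' t ht j).add (hZ' t ht j)).const_mul _)
      fun j => ((hm_int t ht j).add (hZ_int t ht j)).const_mul _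
  have hpotential := neg_mul_sum_integral_le_log_card_add_sum_integral_log
    (loss := fun ω s j => m s ω j + Z s j ω) i (fun t ht => (hm_int t ht i).add (hZ_int t ht i))
    hL_int
  rw [sum_congr rfl fun t ht => by rw [integral_add (hm_int t (mem_range.1 ht) i)
    (hZ_int t (mem_range.1 ht) i), hZ_mean t (mem_range.1 ht) i, add_zero]] at hpotential
  have hrounds := sum_le_sum fun t ht => hround t (mem_range.1 ht)
  rw [sum_sub_distrib, sum_const, card_range, nsmul_eq_mul, ← mul_sum] at hrounds
  rw [integral_finsetSum _ fun t ht => integrable_sum_mul_of_mem_stdSimplex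
      (fun j => (hp t (mem_range.1 ht) j).mono (h𝓕 t) le_rfl) (fun ω => hedgeP_mem_stdSimplex t)
      (hm_int t (mem_range.1 ht)),
    integral_finsetSum _ fun t ht => hm_int t (mem_range.1 ht) i]
  linarith

end Regret

section PastNoise

variable {ι Ω : Type*} {mΩ : MeasurableSpace Ω} {T : ℕ} {Z : ℕ → ι → Ω → ℝ}

variable (T Z) in
abbrev pastNoise (t : ℕ) : MeasurableSpace Ω :=
  ⨆ p ∈ {p : Fin T × ι | (p.1 : ℕ) < t}, MeasurableSpace.comap (Z p.1 p.2) inferInstance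

theorem pastNoise_mono : Monotone (pastNoise T Z) := fun _ _ h =>
  biSup_mono fun _ hp => lt_of_lt_of_le hp h

theorem pastNoise_le (hZ : ∀ t j, Measurable (Z t j)) (t : ℕ) : pastNoise T Z t ≤ mΩ :=
  iSup₂_le fun p _ => (hZ p.1 p.2).comap_le

theorem measurable_pastNoise {s t : ℕ} (hst : s < t) (hsT : s < T) (j : ι) :
    Measurable[pastNoise T Z t] (Z s j) :=
  Measurable.of_comap_le (le_iSup₂_of_le (f := fun (p : Fin T × ι) (_ : (p.1 : ℕ) < t) =>
    MeasurableSpace.comap (Z p.1 p.2) inferInstance) (⟨s, hsT⟩, j) hst le_rfl)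

theorem measurable_pastNoise_comp {β : Type*} [MeasurableSpace β] {t : ℕ} (ht : t ≤ T)
    {F : (Fin t × ι → ℝ) → β} (hF : Measurable F) :
    Measurable[pastNoise T Z t] fun ω => F fun p => Z p.1 p.2 ω := by
  let := pastNoise T Z t
  exact hF.comp
    (measurable_pi_lambda _ fun p => measurable_pastNoise p.1.2 (p.1.2.trans_le ht) p.2)

theorem indep_pastNoise {μ : Measure Ω} (hZ : ∀ t j, Measurable (Z t j))
    (hindep : iIndepFun (fun p : Fin T × ι => Z p.1 p.2) μ) {t : ℕ} (ht : t < T) (j : ι) :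
    Indep (pastNoise T Z t) (MeasurableSpace.comap (Z t j) inferInstance) μ := by
  have h := indep_iSup_of_disjoint (fun p : Fin T × ι => (hZ p.1 p.2).comap_le)
    ((iIndepFun_iff_iIndep _ (fun p : Fin T × ι => Z p.1 p.2) μ).1 hindep)
    (S := {p | (p.1 : ℕ) < t}) (T := {(⟨t, ht⟩, j)}) (by simp)
  simpa [pastNoise] using h

end PastNoise

/-- **Hedge with noisy losses.** With `n ≥ 2` experts, `T ≥ log n` rounds, `ν ∈ [0,1]`,
`η = √(log n / T)`, independent centered Gaussian noises `Z⁽ᵗ⁾ᵢ` of variance `ν²`, and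
losses `m⁽ᵗ⁾ ∈ [−1,1]ⁿ` each a measurable function of the noises of earlier rounds,
running Hedge on the noisy losses `m̂⁽ᵗ⁾ = m⁽ᵗ⁾ + Z⁽ᵗ⁾` guarantees, for every expert `i`,
`E[Σₜ ⟨m⁽ᵗ⁾, p⁽ᵗ⁾⟩] ≤ E[Σₜ m⁽ᵗ⁾ᵢ] + 4·√(T·log n)`. -/
theorem hedge_noisy_regret
    {Ω : Type} [MeasurableSpace Ω] (μpr : Measure Ω) [IsProbabilityMeasure μpr]
    (n T : ℕ) (hn : 2 ≤ n) (hT : Real.log n ≤ (T : ℝ))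
    (ν : ℝ) (hν0 : 0 ≤ ν) (hν1 : ν ≤ 1)
    (Z : ℕ → Fin n → Ω → ℝ)
    (hZmeas : ∀ t i, Measurable (Z t i))
    (hZindep : iIndepFun
      (fun p : Fin T × Fin n => fun ω => Z p.1 p.2 ω) μpr)
    (hZdist : ∀ t < T, ∀ i,
      Measure.map (Z t i) μpr = gaussianReal 0 ⟨ν ^ 2, sq_nonneg ν⟩)
    (m : ℕ → Ω → Fin n → ℝ)
    (hmpast : ∀ t < T, ∃ F : ((Fin t × Fin n) → ℝ) → (Fin n → ℝ),
      Measurable F ∧ ∀ ω, m t ω = F (fun p => Z (p.1 : ℕ) p.2 ω))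
    (hmbdd : ∀ t < T, ∀ ω, ∀ i, |m t ω i| ≤ 1)
    (i : Fin n) :
    (∫ ω, ∑ t ∈ Finset.range T, ∑ j, m t ω j *
        hedgeP (Real.sqrt (Real.log n / T)) (fun s j => m s ω j + Z s j ω) t j ∂μpr)
      ≤ (∫ ω, ∑ t ∈ Finset.range T, m t ω i ∂μpr) + 4 * Real.sqrt (T * Real.log n) := by
  have hlog : 0 < log n := log_pos (by exact_mod_cast hn)
  have hT0 : (0 : ℝ) < T := hlog.trans_le hT
  set η := √(log n / T)
  have hη0 : 0 < η := sqrt_pos.2 (div_pos hlog hT0)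
  have hη1 : η ≤ 1 := sqrt_le_one.2 ((div_le_one hT0).2 hT)
  have hTη : T * η ^ 2 = log n := by rw [sq_sqrt (div_pos hlog hT0).le]; field_simp
  have hηT : η * √(T * log n) = log n := by
    rw [← sqrt_mul (div_pos hlog hT0).le, show log n / T * (T * log n) = log n ^ 2 by field_simp,
      sqrt_sq hlog.le]
  set v : NNReal := ⟨ν ^ 2, sq_nonneg ν⟩
  have hZ_law : ∀ t < T, ∀ j, HasLaw (Z t j) (gaussianReal 0 v) μpr :=
    fun t ht j => ⟨(hZmeas t j).aemeasurable, hZdist t ht j⟩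
  have hregret := hedge_noisy_regret_le_of_indep (pastNoise_le hZmeas) pastNoise_mono
    (fun t ht j => measurable_pastNoise t.lt_succ_self ht j)
    (fun t ht j => (hZ_law t ht j).hasGaussianLaw.integrable)
    (fun t ht j => (hZ_law t ht j).integral_eq.trans integral_id_gaussianReal)
    (fun t ht j => indep_pastNoise hZmeas hZindep ht j) hη0.le hη1
    (c := ν ^ 2 * η ^ 2 / 2) (fun t ht j => by
      rw [mgf_gaussianReal (hZ_law t ht j).map_eq]
      exact congrArg exp (show 0 * -η + ν ^ 2 * (-η) ^ 2 / 2 = ν ^ 2 * η ^ 2 / 2 by ring))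
    (fun t ht j => by
      obtain ⟨F, hF, hmF⟩ := hmpast t ht
      simp only [hmF]
      exact (measurable_pi_apply j).comp (measurable_pastNoise_comp ht.le hF))
    hmbdd i
  have hν : ν ^ 2 ≤ 1 := by nlinarith
  refine le_of_mul_le_mul_left ?_ hη0
  nlinarith
end

section
/- Let G be a graph on n ≥ 2 vertices, let σ be a permutation of V, let ς > 0 and let c > 0. In Peeling(σ, ς), let S be the returned prefix and ρ̂(S) the returned estimate. Then with probability at least 1 − 2·n^{−c}: |ρ̂(S) − ρ(S)| ≤ 2·ς·√((1+c)·log n), and ρ(S) ≥ ρ(S*_σ) − 2·ς·√((1+c)·log n). -/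
open scoped Classical
open MeasureTheory ProbabilityTheory

/-- Number of edges of `G` with both endpoints in `S` (each edge counted once). -/
noncomputable def edgeCount {n : ℕ} (G : SimpleGraph (Fin n)) (S : Finset (Fin n)) : ℕ :=
  ((S ×ˢ S).filter fun p => G.Adj p.1 p.2 ∧ p.1 < p.2).card

/-- Density `ρ(S) = |E(S)|/|S|`. -/
noncomputable def density {n : ℕ} (G : SimpleGraph (Fin n)) (S : Finset (Fin n)) : ℝ :=
  (edgeCount G S : ℝ) / (S.card : ℝ)

/-- `q(σ)_v`: the number of edges `{u,v}` of `G` with `u` preceding `v` in the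
permutation `σ` (where `u` precedes `v` iff `σ u < σ v`). -/
noncomputable def qPerm {n : ℕ} (G : SimpleGraph (Fin n)) (σ : Equiv.Perm (Fin n))
    (v : Fin n) : ℕ :=
  (Finset.univ.filter fun u => G.Adj u v ∧ σ u < σ v).card

/-- The prefix `S^σ_x = {u ∈ V : u ⪯_σ x}` of the permutation `σ`. -/
noncomputable def prefixPerm {n : ℕ} (σ : Equiv.Perm (Fin n)) (x : Fin n) :
    Finset (Fin n) :=
  Finset.univ.filter fun u => σ u ≤ σ x

/-- The noisy density estimate `ρ̂(S^σ_x) = (Σ_{v ⪯_σ x} (q(σ)_v + N_v))/|S^σ_x|`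
computed by Peeling from the noisy reports `q̂(σ)_v = q(σ)_v + N_v`. -/
noncomputable def estDensity {n : ℕ} (G : SimpleGraph (Fin n)) (σ : Equiv.Perm (Fin n))
    (noise : Fin n → ℝ) (x : Fin n) : ℝ :=
  (∑ v ∈ prefixPerm σ x, ((qPerm G σ v : ℝ) + noise v)) / ((prefixPerm σ x).card : ℝ)

/-!
The estimate of a prefix `S` is `ρ(S)` plus the average of the noise over `S`, a linear form
`∑ a_v N_v` with `∑ a_v² = 1/|S| ≤ 1`. The difference of the averages over two nested prefixes
`S ⊆ T` is again such a form, with `∑ a_v² = 1/|S| - 1/|T| ≤ 1`. Each such form is sub-Gaussian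
with variance proxy `ς²`, so it exceeds `B = 2ς√((1+c) log n)` with probability at most
`n^{-2(1+c)}`. Outside `3n` such events every prefix average lies in `[-B, B]` and the average over
the returned prefix exceeds the one over a densest prefix `S*` by at most `B`; comparing
`ρ̂(S) ≥ ρ̂(S*)` then gives both claims, and `3n · n^{-2(1+c)} ≤ 2n^{-c}`.
-/

open scoped NNReal
open Finset Real

namespace ProbabilityTheory

variable {Ω ι : Type*} [MeasurableSpace Ω] {μ : Measure Ω}

lemma HasSubgaussianMGF.mono {X : Ω → ℝ} {c d : ℝ≥0} (h : HasSubgaussianMGF X c μ) (hcd : c ≤ d) :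
    HasSubgaussianMGF X d μ where
  integrable_exp_mul := h.integrable_exp_mul
  mgf_le t := (h.mgf_le t).trans <| exp_le_exp.2 <| by gcongr

lemma hasSubgaussianMGF_of_map_eq_gaussianReal {X : Ω → ℝ} {v : ℝ≥0}
    (h : μ.map X = gaussianReal 0 v) : HasSubgaussianMGF X v μ := by
  have hX : AEMeasurable X μ := aemeasurable_of_map_neZero (by rw [h]; infer_instance)
  rw [← HasSubgaussianMGF.id_map_iff hX, h]
  exact ⟨integrable_exp_mul_gaussianReal, fun t => by simp [mgf_id_gaussianReal]⟩

lemma measureReal_weighted_sum_ge_le [Fintype ι] {X : ι → Ω → ℝ} (hindep : iIndepFun X μ)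
    {c : ℝ≥0} (hX : ∀ i, HasSubgaussianMGF (X i) c μ) {a : ι → ℝ} (ha : ∑ i, a i ^ 2 ≤ 1)
    {ε : ℝ} (hε : 0 ≤ ε) :
    μ.real {ω | ε ≤ ∑ i, a i * X i ω} ≤ exp (-ε ^ 2 / (2 * c)) := by
  have hindep' : iIndepFun (fun i ω => a i * X i ω) μ :=
    hindep.comp (fun i y => a i * y) fun i => measurable_id.const_mul _
  have hXa : ∀ i, HasSubgaussianMGF (fun ω => a i * X i ω) ((a i ^ 2).toNNReal * c) μ := by
    intro i
    rw [Real.toNNReal_of_nonneg (sq_nonneg (a i))]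
    exact (hX i).const_mul (a i)
  refine ((HasSubgaussianMGF.sum_of_iIndepFun hindep' fun i _ => hXa i).mono ?_).measure_ge_le hε
  rw [← Finset.sum_mul]
  refine mul_le_of_le_one_left c.2 ?_
  rw [← Real.toNNReal_sum_of_nonneg fun i _ => sq_nonneg (a i)]
  exact Real.toNNReal_le_one.2 ha

lemma measureReal_exists_weighted_sum_ge_le [Fintype ι] {κ : Type*} [Fintype κ]
    {X : ι → Ω → ℝ} (hindep : iIndepFun X μ) {c : ℝ≥0} (hX : ∀ i, HasSubgaussianMGF (X i) c μ)
    {a : κ → ι → ℝ} (ha : ∀ k, ∑ i, a k i ^ 2 ≤ 1) {ε : ℝ} (hε : 0 ≤ ε) :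
    μ.real {ω | ∃ k, ε ≤ ∑ i, a k i * X i ω} ≤ Fintype.card κ * exp (-ε ^ 2 / (2 * c)) := by
  rw [Set.ofPred_exists]
  refine (measureReal_iUnion_fintype_le _).trans ?_
  calc ∑ k, μ.real {ω | ε ≤ ∑ i, a k i * X i ω}
      ≤ ∑ _k : κ, exp (-ε ^ 2 / (2 * c)) :=
        sum_le_sum fun k _ => measureReal_weighted_sum_ge_le hindep hX (ha k) hε
    _ = Fintype.card κ * exp (-ε ^ 2 / (2 * c)) := by simp

lemma measureReal_exists_abs_ge_or_sub_ge_le [Fintype ι] {κ : Type*} [Fintype κ]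
    {X : ι → Ω → ℝ} (hindep : iIndepFun X μ) {c : ℝ≥0} (hX : ∀ i, HasSubgaussianMGF (X i) c μ)
    {a : κ → ι → ℝ} (ha : ∀ k, ∑ i, a k i ^ 2 ≤ 1) {k₀ : κ}
    (ha₀ : ∀ k, ∑ i, (a k i - a k₀ i) ^ 2 ≤ 1) {ε : ℝ} (hε : 0 ≤ ε) :
    μ.real {ω | ∃ k, ε ≤ |∑ i, a k i * X i ω| ∨
        ε ≤ ∑ i, a k i * X i ω - ∑ i, a k₀ i * X i ω}
      ≤ 3 * Fintype.card κ * exp (-ε ^ 2 / (2 * c)) := by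
  have := hindep.isProbabilityMeasure
  have hsub : {ω | ∃ k, ε ≤ |∑ i, a k i * X i ω| ∨ ε ≤ ∑ i, a k i * X i ω - ∑ i, a k₀ i * X i ω}
      ⊆ {ω | ∃ k, ε ≤ ∑ i, a k i * X i ω} ∪ {ω | ∃ k, ε ≤ ∑ i, (-a k i) * X i ω} ∪
        {ω | ∃ k, ε ≤ ∑ i, (a k i - a k₀ i) * X i ω} := by
    rintro ω ⟨k, h | h⟩
    · rcases le_abs'.1 h with h | h
      · exact Or.inl (Or.inr ⟨k, by simpa using (le_neg.2 h)⟩)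
      · exact Or.inl (Or.inl ⟨k, h⟩)
    · exact Or.inr ⟨k, by simpa [sub_mul] using h⟩
  have hneg : ∀ k, ∑ i, (-a k i) ^ 2 ≤ 1 := by simpa only [neg_sq] using ha
  refine (measureReal_mono hsub).trans <| (measureReal_union_le _ _).trans ?_
  linarith [measureReal_union_le (μ := μ) {ω | ∃ k, ε ≤ ∑ i, a k i * X i ω}
      {ω | ∃ k, ε ≤ ∑ i, (-a k i) * X i ω},
    measureReal_exists_weighted_sum_ge_le hindep hX ha hε,
    measureReal_exists_weighted_sum_ge_le hindep hX hneg hε,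
    measureReal_exists_weighted_sum_ge_le hindep hX ha₀ hε]

lemma one_sub_measureReal_le_of_compl_subset [IsProbabilityMeasure μ] {s t : Set Ω}
    (h : sᶜ ⊆ t) : 1 - μ.real s ≤ μ.real t := by
  have : μ.real Set.univ ≤ μ.real t + μ.real s :=
    (measureReal_mono (by simpa [Set.union_comm] using Set.compl_subset_iff_union.1 h)).trans
      (measureReal_union_le t s)
  simp only [probReal_univ] at this
  linarith

end ProbabilityTheory

namespace SimpleGraph

variable {α β : Type*} [LinearOrder β] (G : SimpleGraph α)

lemma two_mul_card_adj_lt {f : α → β} (hf : Function.Injective f) (s : Finset α) :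
    2 * #{p ∈ s ×ˢ s | G.Adj p.1 p.2 ∧ f p.1 < f p.2} = #{p ∈ s ×ˢ s | G.Adj p.1 p.2} := by
  have hswap : #{p ∈ s ×ˢ s | G.Adj p.1 p.2 ∧ f p.2 < f p.1}
      = #{p ∈ s ×ˢ s | G.Adj p.1 p.2 ∧ f p.1 < f p.2} := by
    refine card_bij' (fun p _ => p.swap) (fun p _ => p.swap) ?_ ?_ (by simp) (by simp) <;>
      simp +contextual [G.adj_comm, and_comm]
  have hsplit : {p ∈ s ×ˢ s | G.Adj p.1 p.2}
      = {p ∈ s ×ˢ s | G.Adj p.1 p.2 ∧ f p.1 < f p.2} ∪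
        {p ∈ s ×ˢ s | G.Adj p.1 p.2 ∧ f p.2 < f p.1} := by
    ext p
    simp only [mem_filter, mem_union]
    constructor
    · rintro ⟨hp, hadj⟩
      rcases lt_or_gt_of_ne (hf.ne hadj.ne) with h | h <;> simp [hp, hadj, h]
    · rintro (⟨hp, hadj, -⟩ | ⟨hp, hadj, -⟩) <;> exact ⟨hp, hadj⟩
  rw [hsplit, card_union_of_disjoint, hswap, two_mul]
  exact disjoint_filter.2 fun p _ h h' => lt_asymm h.2 h'.2

lemma card_adj_lt_eq_card_adj_lt {γ : Type*} [LinearOrder γ] {f : α → β} {g : α → γ}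
    (hf : Function.Injective f) (hg : Function.Injective g) (s : Finset α) :
    #{p ∈ s ×ˢ s | G.Adj p.1 p.2 ∧ f p.1 < f p.2}
      = #{p ∈ s ×ˢ s | G.Adj p.1 p.2 ∧ g p.1 < g p.2} := by
  have := G.two_mul_card_adj_lt hf s
  have := G.two_mul_card_adj_lt hg s
  omega

end SimpleGraph

section UniformWeight

variable {α : Type*}

noncomputable def uniformWeight (S : Finset α) (v : α) : ℝ :=
  if v ∈ S then (#S : ℝ)⁻¹ else 0

lemma uniformWeight_of_mem {S : Finset α} {v : α} (hv : v ∈ S) :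
    uniformWeight S v = (#S : ℝ)⁻¹ :=
  if_pos hv

variable [Fintype α]

lemma sum_uniformWeight_mul (S : Finset α) (g : α → ℝ) :
    ∑ v, uniformWeight S v * g v = (∑ v ∈ S, g v) / #S := by
  simp only [uniformWeight, ite_mul, zero_mul, sum_ite_mem, univ_inter, ← mul_sum]
  rw [div_eq_inv_mul]

lemma sum_uniformWeight_sq (S : Finset α) : ∑ v, uniformWeight S v ^ 2 = (#S : ℝ)⁻¹ := by
  simp only [sq, sum_uniformWeight_mul]
  rw [sum_congr rfl fun v hv => uniformWeight_of_mem hv, sum_const, nsmul_eq_mul]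
  rcases eq_or_ne (#S : ℝ) 0 with h | h
  · simp [h]
  · field_simp

lemma sum_uniformWeight_sq_le_one (S : Finset α) : ∑ v, uniformWeight S v ^ 2 ≤ 1 := by
  rw [sum_uniformWeight_sq]
  exact Nat.cast_inv_le_one _

lemma sum_uniformWeight_mul_uniformWeight {S T : Finset α} (hST : S ⊆ T) (hS : S.Nonempty) :
    ∑ v, uniformWeight S v * uniformWeight T v = (#T : ℝ)⁻¹ := by
  rw [sum_uniformWeight_mul, sum_congr rfl fun v hv => uniformWeight_of_mem (hST hv), sum_const,
    nsmul_eq_mul, mul_div_cancel_left₀ _ (by exact_mod_cast hS.card_pos.ne')]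

lemma sum_sub_uniformWeight_sq_le_one {S T : Finset α} (hST : S ⊆ T) (hS : S.Nonempty) :
    ∑ v, (uniformWeight S v - uniformWeight T v) ^ 2 ≤ 1 := by
  have hsq : ∑ v, (uniformWeight S v - uniformWeight T v) ^ 2
      = ∑ v, uniformWeight S v ^ 2 - 2 * ∑ v, uniformWeight S v * uniformWeight T v
        + ∑ v, uniformWeight T v ^ 2 := by
    simp only [sub_sq, sum_add_distrib, sum_sub_distrib, mul_sum, mul_assoc]
  rw [hsq, sum_uniformWeight_mul_uniformWeight hST hS, sum_uniformWeight_sq, sum_uniformWeight_sq]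
  have : (0 : ℝ) ≤ (#T : ℝ)⁻¹ := by positivity
  linarith [Nat.cast_inv_le_one (α := ℝ) #S]

end UniformWeight

section Peeling

variable {n : ℕ}

@[simp]
lemma mem_prefixPerm {σ : Equiv.Perm (Fin n)} {x u : Fin n} :
    u ∈ prefixPerm σ x ↔ σ u ≤ σ x := by
  simp [prefixPerm]

lemma qPerm_eq_card_filter_prefixPerm (G : SimpleGraph (Fin n)) (σ : Equiv.Perm (Fin n))
    {x v : Fin n} (hv : v ∈ prefixPerm σ x) :
    qPerm G σ v = #{u ∈ prefixPerm σ x | G.Adj u v ∧ σ u < σ v} := by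
  rw [qPerm]
  congr 1
  ext u
  simp only [mem_filter, mem_univ, true_and, mem_prefixPerm, iff_and_self, and_imp]
  exact fun _ h => h.le.trans (mem_prefixPerm.1 hv)

lemma sum_qPerm_prefixPerm (G : SimpleGraph (Fin n)) (σ : Equiv.Perm (Fin n)) (x : Fin n) :
    ∑ v ∈ prefixPerm σ x, qPerm G σ v = edgeCount G (prefixPerm σ x) := by
  set P := prefixPerm σ x
  calc ∑ v ∈ P, qPerm G σ v = ∑ v ∈ P, #{u ∈ P | G.Adj u v ∧ σ u < σ v} :=
        sum_congr rfl fun v hv => qPerm_eq_card_filter_prefixPerm G σ hv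
    _ = #{p ∈ P ×ˢ P | G.Adj p.1 p.2 ∧ σ p.1 < σ p.2} := by
        simp only [card_filter, sum_product_right]
    _ = edgeCount G P := G.card_adj_lt_eq_card_adj_lt σ.injective Function.injective_id P

lemma prefixPerm_nonempty (σ : Equiv.Perm (Fin n)) (x : Fin n) : (prefixPerm σ x).Nonempty :=
  ⟨x, mem_prefixPerm.2 le_rfl⟩

lemma prefixPerm_subset_prefixPerm {σ : Equiv.Perm (Fin n)} {x y : Fin n} (h : σ x ≤ σ y) :
    prefixPerm σ x ⊆ prefixPerm σ y :=
  fun _ hu => mem_prefixPerm.2 ((mem_prefixPerm.1 hu).trans h)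

lemma sum_sub_uniformWeight_prefixPerm_sq_le_one (σ : Equiv.Perm (Fin n)) (x y : Fin n) :
    ∑ v, (uniformWeight (prefixPerm σ x) v - uniformWeight (prefixPerm σ y) v) ^ 2 ≤ 1 := by
  rcases le_total (σ x) (σ y) with h | h
  · exact sum_sub_uniformWeight_sq_le_one (prefixPerm_subset_prefixPerm h) (prefixPerm_nonempty σ x)
  · simpa only [sub_sq_comm] using
      sum_sub_uniformWeight_sq_le_one (prefixPerm_subset_prefixPerm h) (prefixPerm_nonempty σ y)

lemma estDensity_eq_density_add (G : SimpleGraph (Fin n)) (σ : Equiv.Perm (Fin n))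
    (noise : Fin n → ℝ) (x : Fin n) :
    estDensity G σ noise x
      = density G (prefixPerm σ x) + ∑ v, uniformWeight (prefixPerm σ x) v * noise v := by
  rw [estDensity, sum_add_distrib, add_div, sum_uniformWeight_mul, ← Nat.cast_sum,
    sum_qPerm_prefixPerm, density]

lemma peeling_guarantee_of_noise_bounds {G : SimpleGraph (Fin n)} {σ : Equiv.Perm (Fin n)}
    {noise : Fin n → ℝ} {B : ℝ} {xs : Fin n}
    (hxs : ∀ x, density G (prefixPerm σ x) ≤ density G (prefixPerm σ xs))
    (habs : ∀ x, |∑ v, uniformWeight (prefixPerm σ x) v * noise v| ≤ B)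
    (hdiff : ∀ x, ∑ v, uniformWeight (prefixPerm σ x) v * noise v
      - ∑ v, uniformWeight (prefixPerm σ xs) v * noise v ≤ B)
    {u : Fin n} (hu : ∀ x, estDensity G σ noise x ≤ estDensity G σ noise u) :
    |estDensity G σ noise u - density G (prefixPerm σ u)| ≤ B ∧
      (⨆ x, density G (prefixPerm σ x)) - B ≤ density G (prefixPerm σ u) := by
  have : Nonempty (Fin n) := ⟨xs⟩
  have hsup : (⨆ x, density G (prefixPerm σ x)) ≤ density G (prefixPerm σ xs) := ciSup_le hxs
  have hest := estDensity_eq_density_add G σ noise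
  refine ⟨by simpa [hest] using habs u, ?_⟩
  linarith [hu xs, hest u, hest xs, hdiff u]

end Peeling

lemma exp_neg_sq_div_eq_rpow {n : ℕ} (hn : 0 < n) {ς c : ℝ} (hς : ς ≠ 0) (hc : 0 ≤ c) :
    exp (-(2 * ς * √((1 + c) * log n)) ^ 2 / (2 * ς ^ 2)) = (n : ℝ) ^ (-(2 * (1 + c))) := by
  have hlog : 0 ≤ log n := log_natCast_nonneg n
  rw [rpow_def_of_pos (by exact_mod_cast hn), mul_pow, sq_sqrt (by positivity)]
  congr 1
  field_simp

lemma three_mul_rpow_le {n : ℕ} (hn : 2 ≤ n) {c : ℝ} (hc : 0 ≤ c) :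
    3 * (n * (n : ℝ) ^ (-(2 * (1 + c)))) ≤ 2 * (n : ℝ) ^ (-c) := by
  have hn' : (2 : ℝ) ≤ n := by exact_mod_cast hn
  have hsplit : (n : ℝ) * (n : ℝ) ^ (-(2 * (1 + c))) = (n : ℝ) ^ (-1 - c) * (n : ℝ) ^ (-c) := by
    rw [← rpow_add (by positivity), ← rpow_one_add' (by positivity) (by linarith)]
    ring_nf
  have hsmall : (n : ℝ) ^ (-1 - c) ≤ 1 / 2 :=
    calc (n : ℝ) ^ (-1 - c) ≤ (n : ℝ) ^ (-1 : ℝ) :=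
          rpow_le_rpow_of_exponent_le (by linarith) (by linarith)
      _ ≤ 1 / 2 := by rw [rpow_neg_one]; exact inv_anti₀ two_pos hn' |>.trans_eq (one_div 2).symm
  rw [hsplit]
  nlinarith [rpow_pos_of_pos (by linarith : (0 : ℝ) < n) (-c)]

theorem peeling_utility_general
    {Ω : Type} [MeasurableSpace Ω] (μpr : Measure Ω) [IsProbabilityMeasure μpr]
    {n : ℕ} (hn : 2 ≤ n) (G : SimpleGraph (Fin n)) (σ : Equiv.Perm (Fin n))
    (ς c : ℝ) (hς : 0 < ς) (hc : 0 < c)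
    (N : Fin n → Ω → ℝ)
    (hNindep : iIndepFun N μpr)
    (hNdist : ∀ v, Measure.map (N v) μpr = gaussianReal 0 ⟨ς ^ 2, sq_nonneg ς⟩) :
    1 - 2 * (n : ℝ) ^ (-c) ≤
      (μpr {ω | ∀ u : Fin n,
        (∀ x : Fin n, estDensity G σ (fun v => N v ω) x ≤ estDensity G σ (fun v => N v ω) u) →
          |estDensity G σ (fun v => N v ω) u - density G (prefixPerm σ u)| ≤
              2 * ς * Real.sqrt ((1 + c) * Real.log n) ∧
            (⨆ x, density G (prefixPerm σ x)) - 2 * ς * Real.sqrt ((1 + c) * Real.log n) ≤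
              density G (prefixPerm σ u)}).toReal := by
  set B := 2 * ς * √((1 + c) * log n)
  have : Nonempty (Fin n) := ⟨⟨0, by omega⟩⟩
  obtain ⟨xs, hxs⟩ := Finite.exists_max fun x => density G (prefixPerm σ x)
  have hbad := measureReal_exists_abs_ge_or_sub_ge_le hNindep
    (fun v => hasSubgaussianMGF_of_map_eq_gaussianReal (hNdist v))
    (fun x => sum_uniformWeight_sq_le_one (prefixPerm σ x))
    (fun x => sum_sub_uniformWeight_prefixPerm_sq_le_one σ x xs) (by positivity : 0 ≤ B)
  have hexp : exp (-B ^ 2 / (2 * ς ^ 2)) = (n : ℝ) ^ (-(2 * (1 + c))) :=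
    exp_neg_sq_div_eq_rpow (by omega) hς.ne' hc.le
  -- `simp` does not rewrite the coercion of the anonymous-constructor `ℝ≥0` to `ς ^ 2`.
  change _ ≤ _ * exp (-B ^ 2 / (2 * ς ^ 2)) at hbad
  rw [hexp, Fintype.card_fin] at hbad
  refine (one_sub_measureReal_le_of_compl_subset fun ω hω => ?_).trans'
    (by linarith [three_mul_rpow_le hn hc.le])
  simp only [Set.mem_compl_iff, Set.mem_ofPred_eq, not_exists, not_or, not_le] at hω
  exact fun u hu => peeling_guarantee_of_noise_bounds hxs (fun x => (hω x).1.le)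
    (fun x => (hω x).2.le) hu

/-- **Utility of Peeling.** With independent centered Gaussian reports of variance `ς²`,
with probability at least `1 − 2·n^{−c}` the returned prefix `S = S^σ_u` (any prefix `u`
maximizing the estimated density) satisfies both
`|ρ̂(S) − ρ(S)| ≤ 2ς√((1+c)·log n)` and `ρ(S) ≥ ρ(S*_σ) − 2ς√((1+c)·log n)`,
where `ρ(S*_σ)` is the maximum density of a prefix of `σ`. -/
theorem peeling_utility
    {Ω : Type} [MeasurableSpace Ω] (μpr : Measure Ω) [IsProbabilityMeasure μpr]
    {n : ℕ} (hn : 2 ≤ n) (G : SimpleGraph (Fin n)) (σ : Equiv.Perm (Fin n))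
    (ς c : ℝ) (hς : 0 < ς) (hc : 0 < c)
    (N : Fin n → Ω → ℝ)
    (hNmeas : ∀ v, Measurable (N v))
    (hNindep : iIndepFun N μpr)
    (hNdist : ∀ v, Measure.map (N v) μpr = gaussianReal 0 ⟨ς ^ 2, sq_nonneg ς⟩) :
    1 - 2 * (n : ℝ) ^ (-c) ≤
      (μpr {ω | ∀ u : Fin n,
        (∀ x : Fin n, estDensity G σ (fun v => N v ω) x ≤ estDensity G σ (fun v => N v ω) u) →
          |estDensity G σ (fun v => N v ω) u - density G (prefixPerm σ u)| ≤
              2 * ς * Real.sqrt ((1 + c) * Real.log n) ∧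
            (⨆ x, density G (prefixPerm σ x)) - 2 * ς * Real.sqrt ((1 + c) * Real.log n) ≤
              density G (prefixPerm σ u)}).toReal :=
  peeling_utility_general μpr hn G σ ς c hς hc N hNindep hNdist
end

section
/- Let G = (V,E) be a graph with node weights c_v ≥ 1 and let λ > 0. Suppose x : V → ℝ_{≥0} satisfies Σ_{v∈V} c_v·x_v = 1 and Σ_{v∈V} x_v·q(σ)_v ≥ λ for every permutation σ of V. Then there exists τ ∈ (0,1] such that the set S_τ = {v ∈ V : x_v ≥ τ} is nonempty and has node-weighted density ρ(S_τ) = |E(S_τ)|/c(S_τ) ≥ λ. -/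
open scoped Classical

/-- Node-weighted density `ρ(S) = |E(S)|/c(S)` where `c(S) = Σ_{v∈S} c_v`. -/
noncomputable def densityW {n : ℕ} (G : SimpleGraph (Fin n)) (c : Fin n → ℝ)
    (S : Finset (Fin n)) : ℝ :=
  (edgeCount G S : ℝ) / (∑ v ∈ S, c v)

/-!
Order the vertices by decreasing `x` via a permutation `σ`, and let `T k` be the set of the first
`k + 1` vertices. Layer-cake summation writes `x` as a nonnegative combination of the indicators
of the `T k`, with weights the successive drops of the sorted values. It turns `Σ c_v x_v` and
`Σ x_v q(σ)_v` into the same combination of `c(T k)` and `|E(T k)|`; the latter because on a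
`σ`-prefix, `q(σ)` counts every inner edge exactly once, at its later endpoint. Averaging yields
a layer of positive weight with `|E(T k)| ≥ λ c(T k)`, and such a layer is a superlevel set of `x`.
-/

open Finset

theorem card_filter_adj_lt_comp {α β : Type*} [LinearOrder α] [LinearOrder β]
    (G : SimpleGraph α) (S : Finset α) {r : α → β} (hr : Function.Injective r) :
    ((S ×ˢ S).filter fun p => G.Adj p.1 p.2 ∧ r p.1 < r p.2).card =
      ((S ×ˢ S).filter fun p => G.Adj p.1 p.2 ∧ p.1 < p.2).card := by
  refine card_nbij' (fun p => if p.1 < p.2 then p else p.swap)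
    (fun p => if r p.1 < r p.2 then p else p.swap) ?_ ?_ ?_ ?_ <;>
  · rintro ⟨u, v⟩ h
    simp only [coe_filter, mem_product, Set.mem_ofPred_eq] at h ⊢
    have huv := G.ne_of_adj h.2.1
    have hruv : r u ≠ r v := hr.ne huv
    split_ifs <;> simp_all [G.adj_comm, lt_asymm] <;> order

theorem sum_qPerm_eq_edgeCount {n : ℕ} (G : SimpleGraph (Fin n)) (σ : Equiv.Perm (Fin n))
    {S : Finset (Fin n)} (hS : ∀ u v, v ∈ S → σ u < σ v → u ∈ S) :
    ∑ v ∈ S, qPerm G σ v = edgeCount G S := by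
  have hq : ∀ v ∈ S, qPerm G σ v = (S.filter fun u => G.Adj u v ∧ σ u < σ v).card := by
    intro v hv
    rw [qPerm, filter_congr_decidable]
    congr 1
    ext u
    simp only [mem_filter, mem_univ, true_and]
    exact ⟨fun h => ⟨hS u v hv h.2, h⟩, And.right⟩
  rw [sum_congr rfl hq, edgeCount, ← card_filter_adj_lt_comp G S σ.injective, card_filter,
    sum_product_right]
  simp only [card_filter]

theorem sum_Ico_sub_succ (y : ℕ → ℝ) {m n : ℕ} (h : m ≤ n) :
    ∑ k ∈ Ico m n, (y k - y (k + 1)) = y m - y n := by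
  rw [← neg_sub, ← sum_Ico_sub y h, ← sum_neg_distrib]
  simp

theorem sum_mul_eq_sum_range_layers {ι : Type*} [Fintype ι] (a : ι → ℝ) (r : ι → ℕ)
    (y : ℕ → ℝ) {n : ℕ} (hr : ∀ i, r i < n) (hy : y n = 0) :
    ∑ i, a i * y (r i) =
      ∑ k ∈ range n, (y k - y (k + 1)) * ∑ i ∈ univ.filter (fun i => r i ≤ k), a i := by
  have hlayer : ∀ i, y (r i) = ∑ k ∈ range n, if r i ≤ k then y k - y (k + 1) else 0 := by
    intro i
    rw [← sum_filter, ← sub_zero (y (r i)), ← hy, ← sum_Ico_sub_succ y (hr i).le]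
    congr 1
    ext k
    simp only [mem_Ico, mem_filter, mem_range]
    tauto
  simp_rw [hlayer, mul_sum, sum_filter]
  rw [sum_comm]
  refine sum_congr rfl fun k _ => sum_congr rfl fun i _ => ?_
  split_ifs <;> ring

theorem exists_pos_weight_mul_le {ι : Type*} {s : Finset ι} {g A C : ι → ℝ} {lam : ℝ}
    (hg : ∀ k ∈ s, 0 ≤ g k) (hpos : 0 < ∑ k ∈ s, g k * C k)
    (h : lam * ∑ k ∈ s, g k * C k ≤ ∑ k ∈ s, g k * A k) :
    ∃ k ∈ s, 0 < g k ∧ lam * C k ≤ A k := by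
  have hsupp : ∀ f : ι → ℝ, ∑ k ∈ s.filter (0 < g ·), g k * f k = ∑ k ∈ s, g k * f k :=
    fun f => sum_filter_of_ne fun k hk hne => (hg k hk).lt_of_ne' (left_ne_zero_of_mul hne)
  have hne : (s.filter (0 < g ·)).Nonempty := by
    rw [← hsupp] at hpos
    exact nonempty_of_sum_ne_zero hpos.ne'
  obtain ⟨k, hk, hle⟩ := exists_le_of_sum_le hne
    (f := fun k => g k * (lam * C k)) (g := fun k => g k * A k) (by
      simp_rw [mul_left_comm _ lam, ← mul_sum, hsupp]; exact h)
  rw [mem_filter] at hk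
  exact ⟨k, hk.1, hk.2, le_of_mul_le_mul_left hle hk.2⟩

theorem Antitone.le_apply_iff_of_apply_succ_lt {β : Type*} [Preorder β] {y : ℕ → β}
    (hy : Antitone y) {k j : ℕ} (hk : y (k + 1) < y k) : y k ≤ y j ↔ j ≤ k := by
  refine ⟨fun h => ?_, fun h => hy h⟩
  by_contra hjk
  exact (hk.trans_le h).not_ge (hy (Nat.succ_le_of_lt (not_le.1 hjk)))

theorem exists_perm_antitone_eq_comp {n : ℕ} (x : Fin n → ℝ) (hx : ∀ v, 0 ≤ x v) :
    ∃ (σ : Equiv.Perm (Fin n)) (y : ℕ → ℝ), Antitone y ∧ y n = 0 ∧ ∀ v, x v = y (σ v) := by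
  set s := Tuple.sort (OrderDual.toDual ∘ x)
  have hs : Antitone (x ∘ s) := monotone_toDual_comp_iff.1 (Tuple.monotone_sort _)
  refine ⟨s.symm, fun k => if h : k < n then x (s ⟨k, h⟩) else 0, ?_, by simp, fun v => by simp⟩
  intro a b hab
  dsimp only
  split_ifs with hb ha ha
  · exact hs (Fin.mk_le_mk.2 hab)
  · omega
  · exact hx _
  · rfl

theorem le_one_of_sum_mul_eq_one {ι : Type*} [Fintype ι] {c x : ι → ℝ} (hc : ∀ i, 1 ≤ c i)
    (hx : ∀ i, 0 ≤ x i) (h : ∑ i, c i * x i = 1) (i : ι) : x i ≤ 1 := by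
  have : c i * x i ≤ 1 :=
    h ▸ single_le_sum (fun j _ => mul_nonneg (zero_le_one.trans (hc j)) (hx j)) (mem_univ i)
  nlinarith [hc i, hx i]

theorem weighted_primal_to_discrete_general {n : ℕ} (G : SimpleGraph (Fin n))
    (c : Fin n → ℝ) (hc : ∀ v, 1 ≤ c v) (lam : ℝ)
    (x : Fin n → ℝ) (hx0 : ∀ v, 0 ≤ x v)
    (hxsum : ∑ v, c v * x v = 1)
    (hxq : ∀ σ : Equiv.Perm (Fin n), lam ≤ ∑ v, x v * (qPerm G σ v : ℝ)) :
    ∃ τ : ℝ, 0 < τ ∧ τ ≤ 1 ∧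
      (Finset.univ.filter fun v => τ ≤ x v).Nonempty ∧
      lam ≤ densityW G c (Finset.univ.filter fun v => τ ≤ x v) := by
  obtain ⟨σ, y, hy, hyn, hxy⟩ := exists_perm_antitone_eq_comp x hx0
  set T : ℕ → Finset (Fin n) := fun k => univ.filter fun v => (σ v : ℕ) ≤ k
  have hlayers (a : Fin n → ℝ) :
      ∑ v, a v * x v = ∑ k ∈ range n, (y k - y (k + 1)) * ∑ v ∈ T k, a v := by
    simp_rw [hxy]
    exact sum_mul_eq_sum_range_layers a (fun v => σ v) y (fun v => (σ v).isLt) hyn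
  have hC : ∑ k ∈ range n, (y k - y (k + 1)) * ∑ v ∈ T k, c v = 1 := by
    rw [← hlayers, hxsum]
  have hE : lam * 1 ≤ ∑ k ∈ range n, (y k - y (k + 1)) * (edgeCount G (T k) : ℝ) := by
    have hT (k : ℕ) : ∑ v ∈ T k, (qPerm G σ v : ℝ) = edgeCount G (T k) := by
      exact_mod_cast sum_qPerm_eq_edgeCount G σ fun u v hv huv => by
        simp only [T, mem_filter, mem_univ, true_and] at hv ⊢
        exact (Fin.lt_def.1 huv).le.trans hv
    simpa [← hT, ← hlayers, mul_comm] using hxq σ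
  obtain ⟨k, hk, hgk, hdense⟩ := exists_pos_weight_mul_le
    (fun k _ => sub_nonneg.2 (hy k.le_succ)) (hC ▸ one_pos) (hC ▸ hE)
  have hkn : k < n := mem_range.1 hk
  have hS : univ.filter (fun v => y k ≤ x v) = T k := by
    ext v
    simp [T, hxy, hy.le_apply_iff_of_apply_succ_lt (sub_pos.1 hgk)]
  have hmem : σ.symm ⟨k, hkn⟩ ∈ T k := by simp [T]
  refine ⟨y k, ?_, ?_, hS ▸ ⟨_, hmem⟩, ?_⟩
  · linarith [hy (Nat.succ_le_of_lt hkn)]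
  · simpa [hxy] using le_one_of_sum_mul_eq_one hc hx0 hxsum (σ.symm ⟨k, hkn⟩)
  · rw [hS, densityW, le_div_iff₀ (sum_pos (fun v _ => one_pos.trans_le (hc v)) ⟨_, hmem⟩)]
    exact hdense

/-- **Rounding a feasible primal solution to a dense subgraph (weighted case).**
If `x ≥ 0` satisfies `Σ_v c_v·x_v = 1` and `Σ_v x_v·q(σ)_v ≥ λ` for every permutation
`σ`, then some threshold set `S_τ = {v : x_v ≥ τ}` with `τ ∈ (0,1]` is nonempty and has
node-weighted density at least `λ`. -/
theorem weighted_primal_to_discrete {n : ℕ} (G : SimpleGraph (Fin n))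
    (c : Fin n → ℝ) (hc : ∀ v, 1 ≤ c v) (lam : ℝ) (hlam : 0 < lam)
    (x : Fin n → ℝ) (hx0 : ∀ v, 0 ≤ x v)
    (hxsum : ∑ v, c v * x v = 1)
    (hxq : ∀ σ : Equiv.Perm (Fin n), lam ≤ ∑ v, x v * (qPerm G σ v : ℝ)) :
    ∃ τ : ℝ, 0 < τ ∧ τ ≤ 1 ∧
      (Finset.univ.filter fun v => τ ≤ x v).Nonempty ∧
      lam ≤ densityW G c (Finset.univ.filter fun v => τ ≤ x v) :=
  weighted_primal_to_discrete_general G c hc lam x hx0 hxsum hxq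
end

section
/- Let x > 1/2 be a real number, and for a graph G define ρ_x(G) = max(ρ(G), x). Then for any two edge-neighboring graphs G and G' (same vertex set, edge sets differing in exactly one edge), |ρ_x(G) − ρ_x(G')| ≤ 1/(2x−1). -/
open scoped Classical

/-- Maximum subgraph density `ρ(G) = max_{∅≠S⊆V} ρ(S)`. -/
noncomputable def maxDensity {n : ℕ} (G : SimpleGraph (Fin n)) : ℝ :=
  sSup {x : ℝ | ∃ S : Finset (Fin n), S.Nonempty ∧ density G S = x}

/-!
If `ρ(G) > x`, it is attained on a set `S` with `|E(S)| > x|S|`; as `|E(S)| ≤ |S|(|S|+1)/2`,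
this forces `|S| > 2x - 1`. Only one edge of `G` is missing from `G'`, so
`ρ(G') ≥ ρ_{G'}(S) ≥ ρ_G(S) - 1/|S| > ρ(G) - 1/(2x - 1)`. Truncating at `x` discards the small
sets, on which a single edge moves the density by a lot.
-/

lemma Sym2.injOn_mk_of_lt {α : Type*} [LinearOrder α] {s : Set (α × α)}
    (hs : ∀ p ∈ s, p.1 < p.2) : Set.InjOn (fun p => s(p.1, p.2)) s := by
  rintro ⟨a, b⟩ hab ⟨c, d⟩ hcd h
  rcases Sym2.eq_iff.mp h with ⟨rfl, rfl⟩ | ⟨rfl, rfl⟩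
  · rfl
  · exact absurd (hs _ hab) (asymm (hs _ hcd))

section Density

variable {n : ℕ} (G G' : SimpleGraph (Fin n))

lemma edgeCount_le_choose (S : Finset (Fin n)) : edgeCount G S ≤ (S.card + 1).choose 2 := by
  rw [← Finset.card_sym2]
  refine Finset.card_le_card_of_injOn _ (fun p hp => ?_)
    (Sym2.injOn_mk_of_lt fun p hp => (Finset.mem_filter.mp hp).2.2)
  obtain ⟨hpS, -, -⟩ := Finset.mem_filter.mp hp
  exact Finset.mk_mem_sym2_iff.mpr (Finset.mem_product.mp hpS)

lemma edgeCount_le_edgeCount_add [DecidableRel G.Adj] [DecidableRel G'.Adj]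
    (S : Finset (Fin n)) :
    edgeCount G S ≤ edgeCount G' S + (G.edgeFinset \ G'.edgeFinset).card := by
  unfold edgeCount
  refine Nat.sub_le_iff_le_add'.mp ((Finset.le_card_sdiff _ _).trans ?_)
  refine Finset.card_le_card_of_injOn _ (fun p hp => ?_) (Sym2.injOn_mk_of_lt fun p hp => ?_)
  · simp only [Finset.mem_coe, Finset.mem_sdiff, Finset.mem_filter] at hp
    simp only [Finset.coe_sdiff, Set.mem_sdiff, SimpleGraph.coe_edgeFinset,
      SimpleGraph.mem_edgeSet]
    exact ⟨hp.1.2.1, fun h => hp.2 ⟨hp.1.1, h, hp.1.2.2⟩⟩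
  · simp only [Finset.mem_coe, Finset.mem_sdiff, Finset.mem_filter] at hp
    exact hp.1.2.2

lemma card_gt_of_lt_density {S : Finset (Fin n)} {x : ℝ} (h : x < density G S) :
    2 * x - 1 < S.card := by
  rcases S.eq_empty_or_nonempty with rfl | hS
  · simp only [density, Finset.card_empty, Nat.cast_zero, div_zero] at h
    simp only [Finset.card_empty, Nat.cast_zero]
    linarith
  have hm : (0 : ℝ) < S.card := by exact_mod_cast hS.card_pos
  have hxm : x * S.card < edgeCount G S := (lt_div_iff₀ hm).mp h
  have hchoose : (edgeCount G S : ℝ) ≤ (S.card + 1) * S.card / 2 := by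
    have := Nat.cast_le (α := ℝ).mpr (edgeCount_le_choose G S)
    rwa [Nat.cast_choose_two, Nat.cast_add_one, add_sub_cancel_right] at this
  nlinarith

lemma density_le_density_add_div [DecidableRel G.Adj] [DecidableRel G'.Adj]
    (S : Finset (Fin n)) :
    density G S ≤ density G' S + (G.edgeFinset \ G'.edgeFinset).card / S.card := by
  rw [density, density, ← add_div]
  gcongr
  exact_mod_cast edgeCount_le_edgeCount_add G G' S

lemma densities_finite :
    {x : ℝ | ∃ S : Finset (Fin n), S.Nonempty ∧ density G S = x}.Finite :=
  (Set.finite_range (density G)).subset fun _ ⟨S, _, hS⟩ => ⟨S, hS⟩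

lemma density_le_maxDensity {S : Finset (Fin n)} (hS : S.Nonempty) :
    density G S ≤ maxDensity G :=
  le_csSup (densities_finite G).bddAbove ⟨S, hS, rfl⟩

-- On the empty vertex set `maxDensity G = sSup ∅ = 0`.
lemma exists_density_eq_maxDensity (h : maxDensity G ≠ 0) :
    ∃ S : Finset (Fin n), S.Nonempty ∧ density G S = maxDensity G := by
  refine Set.Nonempty.csSup_mem ?_ (densities_finite G)
  by_contra hempty
  exact h (by rw [maxDensity, Set.not_nonempty_iff_eq_empty.mp hempty, Real.sSup_empty])

lemma max_maxDensity_le_add [DecidableRel G.Adj] [DecidableRel G'.Adj]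
    (hGG' : (G.edgeFinset \ G'.edgeFinset).card ≤ 1) {x : ℝ} (hx : 1 / 2 < x) :
    max (maxDensity G) x ≤ max (maxDensity G') x + 1 / (2 * x - 1) := by
  have hpos : 0 < 2 * x - 1 := by linarith
  rcases le_or_gt (maxDensity G) x with hle | hlt
  · rw [max_eq_right hle]
    have := le_max_right (maxDensity G') x
    have := one_div_pos.mpr hpos
    linarith
  obtain ⟨S, hS, hSmax⟩ := exists_density_eq_maxDensity G (by linarith)
  have hcard : 2 * x - 1 < S.card := card_gt_of_lt_density G (hSmax ▸ hlt)
  calc max (maxDensity G) x = density G S := by rw [max_eq_left hlt.le, hSmax]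
    _ ≤ density G' S + (G.edgeFinset \ G'.edgeFinset).card / S.card :=
      density_le_density_add_div G G' S
    _ ≤ max (maxDensity G') x + 1 / (2 * x - 1) := by
      gcongr
      · exact (density_le_maxDensity G' hS).trans (le_max_left _ _)
      · exact_mod_cast hGG'

end Density

/-- **Sensitivity of the truncated density `ρ_x`.** For `x > 1/2` and edge-neighboring
graphs `G`, `G'` (same vertex set, edge sets differing in exactly one edge),
`|ρ_x(G) − ρ_x(G')| ≤ 1/(2x−1)` where `ρ_x(G) = max(ρ(G), x)`. -/
theorem truncated_density_sensitivity {n : ℕ}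
    (G G' : SimpleGraph (Fin n)) [DecidableRel G.Adj] [DecidableRel G'.Adj]
    (hneighbor : (symmDiff G.edgeFinset G'.edgeFinset).card = 1)
    (x : ℝ) (hx : 1 / 2 < x) :
    |max (maxDensity G) x - max (maxDensity G') x| ≤ 1 / (2 * x - 1) := by
  have hGG' : (G.edgeFinset \ G'.edgeFinset).card ≤ 1 :=
    hneighbor ▸ Finset.card_le_card (symmDiff_def G.edgeFinset _ ▸ le_sup_left)
  have hG'G : (G'.edgeFinset \ G.edgeFinset).card ≤ 1 :=
    hneighbor ▸ Finset.card_le_card (symmDiff_def G.edgeFinset _ ▸ le_sup_right)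
  rw [abs_sub_le_iff]
  constructor
  · linarith [max_maxDensity_le_add G G' hGG' hx]
  · linarith [max_maxDensity_le_add G' G hG'G hx]
end

section
/- There is an absolute constant C > 0 such that the following holds. Let ε ∈ (0,1], let n ≥ 2 be an integer, let m ≥ 1 be an integer, and let X_1,…,X_m be independent random variables each distributed as the symmetric geometric distribution Geom(e^ε). Then Pr[ |(1/m)·Σ_{i=1}^m X_i| > C·(log n)/ε ] ≤ n^{−4}. -/
/-!
For `|λ| ≤ ε / 2` the weights of `Geom(e^ε)` times `e^{λk}` are dominated by
`c · e^{-ε|k|/2}`, `c = (e^ε - 1)/(e^ε + 1)`, and summing the two-sided geometric series shows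
that the moment generating function is at most `(u + 1)² / (u² + 1) ≤ 2`, where `u = e^{ε/2}`.
The Chernoff bound with `λ = ±ε/2` then bounds each tail of `∑ Xᵢ` beyond `m · 12 log n / ε`
by `2^m n^{-6m}`, and `2 · 2^m n^{-6m} ≤ 4 n^{-6} ≤ n^{-4}`.
-/

open scoped Classical
open MeasureTheory ProbabilityTheory

/-- The symmetric geometric distribution `Geom(γ)` (as a measure on `ℝ` supported on the
integers): probability mass `((γ−1)/(γ+1))·γ^{−|k|}` at each integer `k`. -/
noncomputable def symGeom (γ : ℝ) : Measure ℝ :=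
  Measure.sum fun k : ℤ =>
    (ENNReal.ofReal ((γ - 1) / (γ + 1) * γ ^ (-|k|))) • Measure.dirac (k : ℝ)

open Real

lemma hasSum_pow_natAbs {r : ℝ} (h0 : 0 ≤ r) (h1 : r < 1) :
    HasSum (fun k : ℤ => r ^ k.natAbs) ((1 + r) / (1 - r)) := by
  have hgeom := hasSum_geometric_of_lt_one h0 h1
  have hsum := HasSum.of_nat_of_neg_add_one (f := fun k : ℤ => r ^ k.natAbs) hgeom
    ((hgeom.mul_left r).congr_fun fun n => by
      rw [Int.natAbs_neg, ← pow_succ']; rfl)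
  convert hsum using 1
  field_simp [(sub_pos.2 h1).ne']

lemma lintegral_symGeom (γ : ℝ) (f : ℝ → ENNReal) :
    ∫⁻ x, f x ∂symGeom γ =
      ∑' k : ℤ, ENNReal.ofReal ((γ - 1) / (γ + 1) * γ ^ (-|k|)) * f k := by
  simp [symGeom, lintegral_sum_measure, lintegral_smul_measure, lintegral_dirac]

lemma exp_zpow_neg_abs_mul_exp_le {ε l : ℝ} (hl : |l| ≤ ε / 2) (k : ℤ) :
    exp ε ^ (-|k|) * exp (l * k) ≤ exp (-(ε / 2)) ^ k.natAbs := by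
  rw [← rpow_intCast, ← exp_mul, ← exp_nat_mul, ← exp_add]
  gcongr
  have : l * k ≤ |l| * |(k : ℝ)| := by rw [← abs_mul]; exact le_abs_self _
  push_cast [Nat.cast_natAbs, Int.cast_abs]
  nlinarith [abs_nonneg (k : ℝ)]

lemma symGeom_const_mul_geom_sum_le_two {ε : ℝ} (hε : 0 < ε) :
    (exp ε - 1) / (exp ε + 1) * ((1 + exp (-(ε / 2))) / (1 - exp (-(ε / 2)))) ≤ 2 := by
  have hu : 1 < exp (ε / 2) := one_lt_exp_iff.2 (by positivity)
  have hexp : exp ε = exp (ε / 2) ^ 2 := by rw [← exp_nat_mul]; ring_nf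
  rw [hexp, exp_neg]
  generalize exp (ε / 2) = u at hu ⊢
  have hu0 : u - 1 ≠ 0 := (sub_pos.2 hu).ne'
  calc (u ^ 2 - 1) / (u ^ 2 + 1) * ((1 + u⁻¹) / (1 - u⁻¹))
      = (u + 1) ^ 2 / (u ^ 2 + 1) := by
        field_simp
        ring
    _ ≤ 2 := by
        rw [div_le_iff₀ (by positivity)]
        nlinarith [sq_nonneg (u - 1)]

lemma lintegral_exp_mul_symGeom_le {ε l : ℝ} (hε : 0 < ε) (hl : |l| ≤ ε / 2) :
    ∫⁻ x, ENNReal.ofReal (exp (l * x)) ∂symGeom (exp ε) ≤ ENNReal.ofReal 2 := by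
  set c := (exp ε - 1) / (exp ε + 1)
  set r := exp (-(ε / 2))
  have hc : 0 ≤ c := div_nonneg (by linarith [add_one_le_exp ε]) (by positivity)
  have hr : r < 1 := exp_lt_one_iff.2 (by linarith)
  have hsum := (hasSum_pow_natAbs (exp_nonneg _) hr).mul_left c
  calc ∫⁻ x, ENNReal.ofReal (exp (l * x)) ∂symGeom (exp ε)
      = ∑' k : ℤ, ENNReal.ofReal (c * exp ε ^ (-|k|) * exp (l * k)) := by
        rw [lintegral_symGeom]
        exact tsum_congr fun k => (ENNReal.ofReal_mul (by positivity)).symm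
    _ ≤ ∑' k : ℤ, ENNReal.ofReal (c * r ^ k.natAbs) := by
        refine ENNReal.tsum_le_tsum fun k => ENNReal.ofReal_le_ofReal ?_
        rw [mul_assoc]
        exact mul_le_mul_of_nonneg_left (exp_zpow_neg_abs_mul_exp_le hl k) hc
    _ = ENNReal.ofReal (c * ((1 + r) / (1 - r))) := by
        rw [← ENNReal.ofReal_tsum_of_nonneg (fun k => by positivity) hsum.summable, hsum.tsum_eq]
    _ ≤ ENNReal.ofReal 2 := ENNReal.ofReal_le_ofReal (symGeom_const_mul_geom_sum_le_two hε)

lemma integrable_exp_mul_symGeom {ε l : ℝ} (hε : 0 < ε) (hl : |l| ≤ ε / 2) :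
    Integrable (fun x => exp (l * x)) (symGeom (exp ε)) := by
  refine ⟨by fun_prop, ?_⟩
  rw [hasFiniteIntegral_iff_ofReal (ae_of_all _ fun x => (exp_pos _).le)]
  exact (lintegral_exp_mul_symGeom_le hε hl).trans_lt ENNReal.ofReal_lt_top

lemma mgf_symGeom_le {ε l : ℝ} (hε : 0 < ε) (hl : |l| ≤ ε / 2) :
    mgf id (symGeom (exp ε)) l ≤ 2 := by
  rw [mgf, integral_eq_lintegral_of_nonneg_ae (ae_of_all _ fun x => (exp_pos _).le)
    (by fun_prop)]
  exact ENNReal.toReal_le_of_le_ofReal zero_le_two (lintegral_exp_mul_symGeom_le hε hl)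

section Chernoff

variable {Ω ι : Type*} [MeasurableSpace Ω] {μ : Measure Ω} [IsProbabilityMeasure μ]
  [Fintype ι] {X : ι → Ω → ℝ} {t M : ℝ}

lemma measureReal_abs_sum_ge_le_of_mgf_le (h_indep : iIndepFun X μ)
    (h_meas : ∀ i, Measurable (X i)) (ht : 0 ≤ t)
    (h_int : ∀ i s, |s| ≤ t → Integrable (fun ω => exp (s * X i ω)) μ)
    (h_mgf : ∀ i s, |s| ≤ t → mgf (X i) μ s ≤ M) (a : ℝ) :
    μ.real {ω | a ≤ |∑ i, X i ω|} ≤ 2 * M ^ Fintype.card ι * exp (-t * a) := by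
  have h_sum_int s (hs : |s| ≤ t) : Integrable (fun ω => exp (s * (∑ i, X i) ω)) μ :=
    h_indep.integrable_exp_mul_sum h_meas fun i _ => h_int i s hs
  have h_sum_mgf s (hs : |s| ≤ t) : mgf (∑ i, X i) μ s ≤ M ^ Fintype.card ι := by
    rw [h_indep.mgf_sum h_meas, ← Finset.card_univ, ← Finset.prod_const]
    exact Finset.prod_le_prod (fun i _ => mgf_nonneg) fun i _ => h_mgf i s hs
  have ht_abs : |t| ≤ t := (abs_of_nonneg ht).le
  have hnt_abs : |-t| ≤ t := by rwa [abs_neg]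
  have h_upper : μ.real {ω | a ≤ (∑ i, X i) ω} ≤ exp (-t * a) * M ^ Fintype.card ι :=
    (measure_ge_le_exp_mul_mgf a ht (h_sum_int t ht_abs)).trans
      (mul_le_mul_of_nonneg_left (h_sum_mgf t ht_abs) (exp_pos _).le)
  have h_lower : μ.real {ω | (∑ i, X i) ω ≤ -a} ≤ exp (-t * a) * M ^ Fintype.card ι := by
    refine (measure_le_le_exp_mul_mgf (-a) (neg_nonpos.2 ht) (h_sum_int (-t) hnt_abs)).trans ?_
    rw [neg_mul_neg]
    exact mul_le_mul_of_nonneg_left (h_sum_mgf (-t) hnt_abs) (exp_pos _).le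
  calc μ.real {ω | a ≤ |∑ i, X i ω|}
      ≤ μ.real ({ω | a ≤ (∑ i, X i) ω} ∪ {ω | (∑ i, X i) ω ≤ -a}) := by
        refine measureReal_mono fun ω hω => ?_
        simp only [Set.mem_ofPred_eq, Set.mem_union, Finset.sum_apply] at hω ⊢
        exact (le_abs'.1 hω).symm
    _ ≤ 2 * M ^ Fintype.card ι * exp (-t * a) := by
        linarith [measureReal_union_le (μ := μ) {ω | a ≤ (∑ i, X i) ω}
          {ω | (∑ i, X i) ω ≤ -a}]

end Chernoff

lemma two_mul_two_pow_mul_exp_neg_le {n m : ℕ} (hn : 2 ≤ n) (hm : 1 ≤ m) :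
    2 * 2 ^ m * exp (-(6 * m * log n)) ≤ (n : ℝ) ^ (-4 : ℝ) := by
  have hn' : (2 : ℝ) ≤ n := by exact_mod_cast hn
  have hexp : exp (-(6 * m * log n)) = ((n : ℝ) ^ 6)⁻¹ ^ m := by
    rw [← exp_log (by positivity : 0 < ((n : ℝ) ^ 6)⁻¹), ← exp_nat_mul, log_inv, log_pow]
    push_cast
    ring_nf
  have hbase : 2 * ((n : ℝ) ^ 6)⁻¹ ≤ 1 := by
    rw [← div_eq_mul_inv, div_le_one (by positivity)]
    nlinarith [pow_le_pow_left₀ zero_le_two hn' 6]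
  calc 2 * 2 ^ m * exp (-(6 * m * log n))
      = 2 * (2 * ((n : ℝ) ^ 6)⁻¹) ^ m := by rw [hexp, mul_pow]; ring
    _ ≤ 2 * (2 * ((n : ℝ) ^ 6)⁻¹) := by
        gcongr; exact pow_le_of_le_one (by positivity) hbase (by omega)
    _ = 4 / (n : ℝ) ^ 2 * ((n : ℝ) ^ 4)⁻¹ := by field_simp; ring
    _ ≤ 1 * ((n : ℝ) ^ 4)⁻¹ := by
        gcongr
        rw [div_le_one (by positivity)]
        nlinarith
    _ = (n : ℝ) ^ (-4 : ℝ) := by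
        rw [one_mul, rpow_neg (by positivity)]
        norm_cast

/-- **Concentration of the average of symmetric geometric noises.** There is an absolute
constant `C > 0` such that for every `ε ∈ (0,1]`, every `n ≥ 2`, every `m ≥ 1`, and
independent random variables `X_1,…,X_m` each distributed as `Geom(e^ε)`,
`Pr[|(1/m)·Σ_i X_i| > C·(log n)/ε] ≤ n^{−4}`. -/
theorem symGeom_average_concentration :
    ∃ C : ℝ, 0 < C ∧
    ∀ {Ω : Type} [MeasurableSpace Ω] (μpr : Measure Ω) [IsProbabilityMeasure μpr]
      (ε : ℝ) (_hε0 : 0 < ε) (_hε1 : ε ≤ 1)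
      (n m : ℕ) (_hn : 2 ≤ n) (_hm : 1 ≤ m)
      (X : Fin m → Ω → ℝ)
      (_hXmeas : ∀ i, Measurable (X i))
      (_hXindep : iIndepFun X μpr)
      (_hXdist : ∀ i, Measure.map (X i) μpr = symGeom (Real.exp ε)),
      (μpr {ω | C * Real.log n / ε < |(1 / (m : ℝ)) * ∑ i, X i ω|}).toReal ≤
        (n : ℝ) ^ (-4 : ℝ) := by
  refine ⟨12, by norm_num, fun μ _ ε hε _ n m hn hm X hX_meas hX_indep hX_dist => ?_⟩
  have hX_int i s (hs : |s| ≤ ε / 2) : Integrable (fun ω => exp (s * X i ω)) μ := by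
    have h := integrable_exp_mul_symGeom hε hs
    rw [← hX_dist i] at h
    exact (integrable_map_measure (by fun_prop) (hX_meas i).aemeasurable).1 h
  have hX_mgf i s (hs : |s| ≤ ε / 2) : mgf (X i) μ s ≤ 2 := by
    rw [← mgf_id_map (hX_meas i).aemeasurable, hX_dist i]
    exact mgf_symGeom_le hε hs
  have hm0 : (0 : ℝ) < m := by exact_mod_cast hm
  calc μ.real {ω | 12 * log n / ε < |(1 / (m : ℝ)) * ∑ i, X i ω|}
      ≤ μ.real {ω | m * (12 * log n / ε) ≤ |∑ i, X i ω|} := by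
        refine measureReal_mono fun ω hω => ?_
        rw [Set.mem_ofPred_eq, abs_mul, abs_of_pos (by positivity), one_div_mul_eq_div,
          lt_div_iff₀ hm0] at hω
        exact (mul_comm _ _).trans_le hω.le
    _ ≤ 2 * 2 ^ Fintype.card (Fin m) * exp (-(ε / 2) * (m * (12 * log n / ε))) :=
        measureReal_abs_sum_ge_le_of_mgf_le hX_indep hX_meas (by positivity) hX_int hX_mgf _
    _ = 2 * 2 ^ m * exp (-(6 * m * log n)) := by
        rw [Fintype.card_fin]
        field_simp
        ring_nf
    _ ≤ (n : ℝ) ^ (-4 : ℝ) := two_mul_two_pow_mul_exp_neg_le hn hm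
end

section
/- There is an absolute constant c > 0 such that the following holds. Let n ≥ 2, let V be a set of n vertices, let S ⊆ V be nonempty, let d : S → ℝ_{≥0} with d(v) ≤ n for all v ∈ S, let ε ∈ (0,1] and η > 0. Let (X_v)_{v∈S} be independent random variables each distributed as Geom(e^ε), set D(v) = d(v) + X_v, and set T = (1+η)·(1/|S|)·Σ_{u∈S} D(u). Then for every v ∈ S with d(v) > (1+η)·(1/|S|)·Σ_{u∈S} d(u) + c·((1+η)/ε)·log n, it holds that Pr[D(v) ≤ T] ≤ 1/n³. -/
/-!
If every noise term satisfies `|X_u| < t`, the noisy mean is below the true mean plus `t`, so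
`T < (1+η)·mean d + (1+η)·t` while `D(v) > d(v) - t`; a margin of `2(1+η)t` in the hypothesis
on `d(v)` therefore forces `D(v) > T`. Summing the geometric tail on both sides gives
`Pr[|X_u| ≥ t] ≤ 2e^{-εt}`, which is `2n⁻⁵` for `t = 5 log n / ε`, and a union bound over the
at most `n` vertices of `S` gives `2n · n⁻⁵ ≤ n⁻³`; this choice of `t` corresponds to `c = 10`.
-/

open scoped Classical
open MeasureTheory ProbabilityTheory

open scoped ENNReal

lemma symGeom_apply (γ : ℝ) {s : Set ℝ} (hs : MeasurableSet s) :
    symGeom γ s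
      = ∑' k : ℤ, ENNReal.ofReal ((γ - 1) / (γ + 1) * γ ^ (-|k|)) * s.indicator 1 (k : ℝ) := by
  simp only [symGeom, Measure.sum_apply _ hs, Measure.smul_apply, smul_eq_mul,
    Measure.dirac_apply' _ hs]

lemma tsum_indicator_Ici_zpow_neg {γ : ℝ} (hγ : 1 < γ) (a : ℤ) :
    ∑' k : ℤ, (Set.Ici a).indicator (fun k => ENNReal.ofReal (γ ^ (-k))) k
      = ENNReal.ofReal (γ ^ (-a) * (γ / (γ - 1))) := by
  have hγ0 : 0 < γ := zero_lt_one.trans hγ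
  have hr : γ⁻¹ < 1 := inv_lt_one_of_one_lt₀ hγ
  have hinj : Function.Injective fun j : ℕ => a + j := fun i j h => by simpa using h
  have hrange : Function.support ((Set.Ici a).indicator fun k => ENNReal.ofReal (γ ^ (-k)))
      ⊆ Set.range fun j : ℕ => a + j := fun k hk =>
    ⟨(k - a).toNat, by have := Set.support_indicator_subset hk; simp_all⟩
  rw [← hinj.tsum_eq hrange]
  have hterm (j : ℕ) : (Set.Ici a).indicator (fun k => ENNReal.ofReal (γ ^ (-k))) (a + j)
      = ENNReal.ofReal (γ ^ (-a) * γ⁻¹ ^ j) := by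
    rw [Set.indicator_of_mem (by simp), neg_add, zpow_add₀ hγ0.ne', zpow_neg γ (j : ℤ),
      zpow_natCast, inv_pow]
  simp only [hterm]
  rw [← ENNReal.ofReal_tsum_of_nonneg (fun j => by positivity)
    ((summable_geometric_of_lt_one (by positivity) hr).mul_left _), tsum_mul_left,
    tsum_geometric_of_lt_one (by positivity) hr]
  congr 2
  field_simp

lemma symGeom_abs_ge_le {γ : ℝ} (hγ : 1 < γ) (t : ℝ) :
    symGeom γ {x | t ≤ |x|} ≤ ENNReal.ofReal (2 * γ ^ (-t)) := by
  have hγ0 : 0 < γ := zero_lt_one.trans hγ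
  have hC : 0 ≤ (γ - 1) / (γ + 1) := div_nonneg (by linarith) (by linarith)
  set a : ℤ := ⌈t⌉
  set g : ℤ → ℝ≥0∞ := (Set.Ici a).indicator fun k => ENNReal.ofReal (γ ^ (-k))
  -- a term with `t ≤ |k|` is charged to `k` or to `-k`, whichever is nonnegative
  have hterm (k : ℤ) :
      ENNReal.ofReal ((γ - 1) / (γ + 1) * γ ^ (-|k|)) * {x : ℝ | t ≤ |x|}.indicator 1 (k : ℝ)
        ≤ ENNReal.ofReal ((γ - 1) / (γ + 1)) * (g k + g (-k)) := by
    by_cases hk : (k : ℝ) ∈ {x : ℝ | t ≤ |x|}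
    · have hak : a ≤ |k| := Int.ceil_le.mpr (by simpa using hk)
      have hg : ENNReal.ofReal (γ ^ (-|k|)) = g |k| := by
        simp [g, Set.indicator_of_mem (Set.mem_Ici.mpr hak)]
      rw [Set.indicator_of_mem hk, Pi.one_apply, mul_one, ENNReal.ofReal_mul hC, hg]
      gcongr
      rcases abs_choice k with h | h <;> rw [h]
      exacts [le_self_add, le_add_self]
    · simp [Set.indicator_of_notMem hk]
  have hsum : ∑' k : ℤ, g k = ENNReal.ofReal (γ ^ (-a) * (γ / (γ - 1))) :=
    tsum_indicator_Ici_zpow_neg hγ a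
  have hbound : (γ - 1) / (γ + 1) * (γ ^ (-a) * (γ / (γ - 1))) ≤ γ ^ (-t) := by
    have hfrac : (γ - 1) / (γ + 1) * (γ / (γ - 1)) ≤ 1 := by
      rw [div_mul_div_comm, div_le_one (by nlinarith)]; nlinarith
    have hpow : γ ^ (-a) ≤ γ ^ (-t) := by
      rw [← Real.rpow_intCast]
      exact Real.rpow_le_rpow_of_exponent_le hγ.le (by push_cast; linarith [Int.le_ceil t])
    calc (γ - 1) / (γ + 1) * (γ ^ (-a) * (γ / (γ - 1)))
        = γ ^ (-a) * ((γ - 1) / (γ + 1) * (γ / (γ - 1))) := by ring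
      _ ≤ γ ^ (-a) * 1 := by gcongr
      _ ≤ γ ^ (-t) := by rw [mul_one]; exact hpow
  calc symGeom γ {x | t ≤ |x|}
      ≤ ∑' k : ℤ, ENNReal.ofReal ((γ - 1) / (γ + 1)) * (g k + g (-k)) := by
        rw [symGeom_apply γ (measurableSet_le measurable_const continuous_abs.measurable)]
        exact ENNReal.tsum_le_tsum hterm
    _ = ENNReal.ofReal ((γ - 1) / (γ + 1)) * (2 * ∑' k : ℤ, g k) := by
        rw [ENNReal.tsum_mul_left, ENNReal.tsum_add, tsum_comp_neg g, two_mul]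
    _ ≤ ENNReal.ofReal (2 * γ ^ (-t)) := by
        rw [hsum, ← ENNReal.ofReal_ofNat 2, ← ENNReal.ofReal_mul (by norm_num),
          ← ENNReal.ofReal_mul hC]
        exact ENNReal.ofReal_le_ofReal (by linarith)

lemma symGeom_exp_abs_ge_le {ε : ℝ} (hε : 0 < ε) (t : ℝ) :
    (symGeom (Real.exp ε)).real {x | t ≤ |x|} ≤ 2 * Real.exp (-(ε * t)) := by
  have h := symGeom_abs_ge_le (Real.one_lt_exp_iff.mpr hε) t
  rw [Real.rpow_def_of_pos (Real.exp_pos ε), Real.log_exp, mul_neg] at h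
  exact ENNReal.toReal_le_of_le_ofReal (by positivity) h

lemma mean_lt_of_abs_lt {ι : Type*} {S : Finset ι} (hS : S.Nonempty) {x : ι → ℝ} {t : ℝ}
    (hx : ∀ u ∈ S, |x u| < t) :
    (1 / (S.card : ℝ)) * ∑ u ∈ S, x u < t := by
  have hcard : (0 : ℝ) < S.card := by exact_mod_cast hS.card_pos
  have hsum : ∑ u ∈ S, x u < S.card * t := by
    simpa using Finset.sum_lt_sum_of_nonempty hS fun u hu => (abs_lt.mp (hx u hu)).2
  rw [one_div_mul_eq_div, div_lt_iff₀ hcard]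
  linarith

lemma exists_abs_ge_of_le_mul_mean {ι : Type*} {S : Finset ι} {v : ι} (hv : v ∈ S)
    {d x : ι → ℝ} {κ t : ℝ} (hκ : 1 ≤ κ)
    (hgap : κ * ((1 / (S.card : ℝ)) * ∑ u ∈ S, d u) + 2 * κ * t < d v)
    (hle : d v + x v ≤ κ * ((1 / (S.card : ℝ)) * ∑ u ∈ S, (d u + x u))) :
    ∃ u ∈ S, t ≤ |x u| := by
  by_contra! hx
  have hmean : κ * ((1 / (S.card : ℝ)) * ∑ u ∈ S, x u) ≤ κ * t :=
    mul_le_mul_of_nonneg_left (mean_lt_of_abs_lt ⟨v, hv⟩ hx).le (by linarith)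
  have hxv : -t < x v := (abs_lt.mp (hx v hv)).1
  have ht : t ≤ κ * t := le_mul_of_one_le_left ((abs_nonneg _).trans (hx v hv).le) hκ
  rw [Finset.sum_add_distrib, mul_add, mul_add] at hle
  linarith

lemma measureReal_exists_abs_ge_le {ι Ω : Type*} [MeasurableSpace Ω] (μ : Measure Ω)
    [IsFiniteMeasure μ] (S : Finset ι) {X : ι → Ω → ℝ} {ε : ℝ} (hε : 0 < ε)
    (hX : ∀ u ∈ S, Measurable (X u)) (hdist : ∀ u ∈ S, μ.map (X u) = symGeom (Real.exp ε))
    (t : ℝ) :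
    μ.real {ω | ∃ u ∈ S, t ≤ |X u ω|} ≤ S.card * (2 * Real.exp (-(ε * t))) := by
  have htail (u : ι) (hu : u ∈ S) : μ.real {ω | t ≤ |X u ω|} ≤ 2 * Real.exp (-(ε * t)) :=
    calc μ.real {ω | t ≤ |X u ω|} = (symGeom (Real.exp ε)).real {x | t ≤ |x|} := by
          rw [← hdist u hu, map_measureReal_apply (hX u hu)
            (measurableSet_le measurable_const continuous_abs.measurable)]
          rfl
      _ ≤ 2 * Real.exp (-(ε * t)) := symGeom_exp_abs_ge_le hε t
  calc μ.real {ω | ∃ u ∈ S, t ≤ |X u ω|}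
      = μ.real (⋃ u ∈ S, {ω | t ≤ |X u ω|}) := by congr 1; ext ω; simp
    _ ≤ ∑ u ∈ S, μ.real {ω | t ≤ |X u ω|} := measureReal_biUnion_finset_le S _
    _ ≤ S.card * (2 * Real.exp (-(ε * t))) := by
      simpa using Finset.sum_le_card_nsmul S _ _ htail

lemma mul_two_mul_exp_neg_five_log_le {n : ℝ} (hn : 2 ≤ n) :
    n * (2 * Real.exp (-(5 * Real.log n))) ≤ 1 / n ^ 3 := by
  have hn0 : 0 < n := by linarith
  have hexp : Real.exp (-(5 * Real.log n)) = (n ^ 5)⁻¹ := by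
    rw [Real.exp_neg, ← Real.exp_log (pow_pos hn0 5), Real.log_pow]
    norm_num
  rw [hexp, ← div_eq_mul_inv, mul_div_assoc', div_le_div_iff₀ (by positivity) (by positivity)]
  nlinarith [pow_pos hn0 4]

/-- **High-degree vertices survive a noisy threshold step.** There is an absolute
constant `c > 0` such that: for every `n ≥ 2`, vertex set `V = Fin n`, nonempty
`S ⊆ V`, degrees `d : S → [0, n]`, `ε ∈ (0,1]` and `η > 0`, if the `X_v` (`v ∈ S`) are
independent `Geom(e^ε)` noises, `D(v) = d(v) + X_v`, and
`T = (1+η)·(1/|S|)·Σ_{u∈S} D(u)`, then every `v ∈ S` with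
`d(v) > (1+η)·(1/|S|)·Σ_{u∈S} d(u) + c·((1+η)/ε)·log n` satisfies
`Pr[D(v) ≤ T] ≤ 1/n³`. -/
theorem noisy_threshold_survival :
    ∃ c : ℝ, 0 < c ∧
    ∀ {Ω : Type} [MeasurableSpace Ω] (μpr : Measure Ω) [IsProbabilityMeasure μpr]
      (n : ℕ) (_hn : 2 ≤ n)
      (S : Finset (Fin n)) (_hS : S.Nonempty)
      (d : Fin n → ℝ) (_hd0 : ∀ v ∈ S, 0 ≤ d v) (_hdn : ∀ v ∈ S, d v ≤ (n : ℝ))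
      (ε η : ℝ) (_hε0 : 0 < ε) (_hε1 : ε ≤ 1) (_hη : 0 < η)
      (X : Fin n → Ω → ℝ)
      (_hXmeas : ∀ v, Measurable (X v))
      (_hXindep : iIndepFun
        (fun v : {v : Fin n // v ∈ S} => X v) μpr)
      (_hXdist : ∀ v ∈ S, Measure.map (X v) μpr = symGeom (Real.exp ε)),
      ∀ v ∈ S,
        (1 + η) * ((1 / (S.card : ℝ)) * ∑ u ∈ S, d u) + c * ((1 + η) / ε) * Real.log n
            < d v →
        (μpr {ω |
          d v + X v ω ≤
            (1 + η) * ((1 / (S.card : ℝ)) * ∑ u ∈ S, (d u + X u ω))}).toReal ≤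
          1 / (n : ℝ) ^ 3 := by
  refine ⟨10, by norm_num, ?_⟩
  intro Ω _ μpr _ n hn S _ d _ _ ε η hε _ hη X hX _ hXdist v hv hgap
  obtain ⟨t, ht⟩ : ∃ t, ε * t = 5 * Real.log n := ⟨_, mul_div_cancel₀ _ hε.ne'⟩
  have hmargin : 10 * ((1 + η) / ε) * Real.log n = 2 * (1 + η) * t := by
    rw [show Real.log n = ε * t / 5 by linarith]
    field_simp
    ring
  rw [hmargin] at hgap
  have hevent : {ω | d v + X v ω ≤ (1 + η) * ((1 / (S.card : ℝ)) * ∑ u ∈ S, (d u + X u ω))}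
      ⊆ {ω | ∃ u ∈ S, t ≤ |X u ω|} := fun ω hω =>
    exists_abs_ge_of_le_mul_mean hv (by linarith) hgap hω
  have hcard : (S.card : ℝ) ≤ n := by
    exact_mod_cast S.card_le_univ.trans_eq (Fintype.card_fin n)
  calc μpr.real _ ≤ μpr.real {ω | ∃ u ∈ S, t ≤ |X u ω|} := measureReal_mono hevent
    _ ≤ S.card * (2 * Real.exp (-(ε * t))) :=
      measureReal_exists_abs_ge_le μpr S hε (fun u _ => hX u) hXdist t
    _ ≤ n * (2 * Real.exp (-(5 * Real.log n))) := by
      rw [ht]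
      gcongr
    _ ≤ 1 / (n : ℝ) ^ 3 := mul_two_mul_exp_neg_five_log_le (by exact_mod_cast hn)
end

section
/- Let G = (V,E) be a graph. For any vector x ∈ [0,1]^V, Σ_{{u,v}∈E} min(x_u, x_v) = min_{σ} Σ_{v∈V} x_v·q(σ)_v, where the minimum is over all permutations σ of V; moreover, any permutation σ that orders the vertices in nonincreasing order of the values x_v attains this minimum. -/
/-!
Orient every edge towards its later endpoint under `σ`. Then `Σ_v x_v q(σ)_v` is the sum, over
the edges, of `x` at the later endpoint, which is at least the minimum of `x` on that edge, with
equality on every edge when `x` is nonincreasing along `σ`. Sorting `x` provides such a `σ`.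
-/

open scoped Classical

theorem SimpleGraph.sum_edgeFinset_eq_sum_adj_lt {V α M : Type*} [Fintype V] [LinearOrder α]
    [AddCommMonoid M] (G : SimpleGraph V) [DecidableRel G.Adj] [Fintype G.edgeSet] {r : V → α}
    (hr : Function.Injective r) (g : Sym2 V → M) :
    ∑ e ∈ G.edgeFinset, g e =
      ∑ p ∈ Finset.univ.filter (fun p : V × V => G.Adj p.1 p.2 ∧ r p.1 < r p.2),
        g s(p.1, p.2) := by
  symm
  refine Finset.sum_bij (fun p _ => s(p.1, p.2)) ?_ ?_ ?_ (fun _ _ => rfl)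
  · intro p hp
    exact G.mem_edgeFinset.2 (Finset.mem_filter.1 hp).2.1
  · rintro ⟨a, b⟩ hab ⟨c, d⟩ hcd h
    simp only [Finset.mem_filter, Finset.mem_univ, true_and] at hab hcd
    rcases Sym2.mk_eq_mk_iff.1 h with h | h
    · exact h
    · simp only [Prod.swap_prod_mk, Prod.mk.injEq] at h
      obtain ⟨rfl, rfl⟩ := h
      exact absurd hab.2 hcd.2.not_gt
  · intro e he
    induction e using Sym2.ind with
    | _ u v =>
      have huv : G.Adj u v := G.mem_edgeFinset.1 he
      rcases (hr.ne huv.ne).lt_or_gt with h | h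
      · exact ⟨(u, v), by simp [huv, h], rfl⟩
      · exact ⟨(v, u), by simp [huv.symm, h], Sym2.eq_swap⟩

theorem Tuple.exists_perm_monotone {n : ℕ} {α : Type*} [LinearOrder α] (f : Fin n → α) :
    ∃ σ : Equiv.Perm (Fin n), ∀ u v, σ u < σ v → f u ≤ f v := by
  refine ⟨(Tuple.sort f)⁻¹, fun u v h => ?_⟩
  simpa [Equiv.Perm.inv_def] using Tuple.monotone_sort f h.le

theorem sum_mul_qPerm_eq_sum_adj_lt {n : ℕ} (G : SimpleGraph (Fin n)) [DecidableRel G.Adj]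
    (σ : Equiv.Perm (Fin n)) (x : Fin n → ℝ) :
    ∑ v, x v * (qPerm G σ v : ℝ) =
      ∑ p ∈ Finset.univ.filter (fun p : Fin n × Fin n => G.Adj p.1 p.2 ∧ σ p.1 < σ p.2),
        x p.2 := by
  rw [Finset.sum_filter, Fintype.sum_prod_type, Finset.sum_comm]
  refine Fintype.sum_congr _ _ fun v => ?_
  rw [← Finset.sum_filter]
  dsimp only
  rw [Finset.sum_const, nsmul_eq_mul, mul_comm, qPerm]
  -- `qPerm` filters with the classical instance, the right-hand side with `G`'s own
  congr

theorem min_over_orderings_general {n : ℕ} (G : SimpleGraph (Fin n)) [DecidableRel G.Adj]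
    (x : Fin n → ℝ) :
    (∀ σ : Equiv.Perm (Fin n),
      (∑ e ∈ G.edgeFinset,
          Sym2.lift ⟨fun u v => min (x u) (x v), fun a b => min_comm (x a) (x b)⟩ e) ≤
        ∑ v, x v * (qPerm G σ v : ℝ)) ∧
    (∃ σ : Equiv.Perm (Fin n), ∀ u v : Fin n, σ u < σ v → x v ≤ x u) ∧
    (∀ σ : Equiv.Perm (Fin n), (∀ u v : Fin n, σ u < σ v → x v ≤ x u) →
      (∑ e ∈ G.edgeFinset,
          Sym2.lift ⟨fun u v => min (x u) (x v), fun a b => min_comm (x a) (x b)⟩ e) =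
        ∑ v, x v * (qPerm G σ v : ℝ)) := by
  refine ⟨fun σ => ?_, ?_, fun σ hσ => ?_⟩
  · rw [G.sum_edgeFinset_eq_sum_adj_lt σ.injective, sum_mul_qPerm_eq_sum_adj_lt]
    exact Finset.sum_le_sum fun p _ => min_le_right _ _
  · simpa using Tuple.exists_perm_monotone (OrderDual.toDual ∘ x)
  · rw [G.sum_edgeFinset_eq_sum_adj_lt σ.injective, sum_mul_qPerm_eq_sum_adj_lt]
    refine Finset.sum_congr rfl fun p hp => min_eq_right (hσ _ _ ?_)
    exact (Finset.mem_filter.1 hp).2.2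

/-- **Optimal ordering lemma.** For any `x ∈ [0,1]^V`,
`Σ_{{u,v}∈E} min(x_u, x_v) = min_σ Σ_v x_v·q(σ)_v`: every permutation gives at least the
left-hand side, some permutation orders the vertices in nonincreasing order of `x`, and
every permutation ordering the vertices in nonincreasing order of `x` attains equality. -/
theorem min_over_orderings {n : ℕ} (G : SimpleGraph (Fin n)) [DecidableRel G.Adj]
    (x : Fin n → ℝ) (hx0 : ∀ v, 0 ≤ x v) (hx1 : ∀ v, x v ≤ 1) :
    (∀ σ : Equiv.Perm (Fin n),
      (∑ e ∈ G.edgeFinset,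
          Sym2.lift ⟨fun u v => min (x u) (x v), fun a b => min_comm (x a) (x b)⟩ e) ≤
        ∑ v, x v * (qPerm G σ v : ℝ)) ∧
    (∃ σ : Equiv.Perm (Fin n), ∀ u v : Fin n, σ u < σ v → x v ≤ x u) ∧
    (∀ σ : Equiv.Perm (Fin n), (∀ u v : Fin n, σ u < σ v → x v ≤ x u) →
      (∑ e ∈ G.edgeFinset,
          Sym2.lift ⟨fun u v => min (x u) (x v), fun a b => min_comm (x a) (x b)⟩ e) =
        ∑ v, x v * (qPerm G σ v : ℝ)) :=
  min_over_orderings_general G x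
end

section
/- Let G = (V,E) be a directed graph, let S, T ⊆ V be nonempty, and let t > 0. Let S^L denote the copy of S in V^L and T^R the copy of T in V^R in the node-weighted undirected bipartite graph G_t. Then ρ_G(S,T) ≥ ρ_{G_t}(S^L ∪ T^R). -/
open scoped Classical

/-- Directed density `ρ_G(S,T) = |E(S,T)|/√(|S|·|T|)`, where `E` is the edge set of a
directed graph on `Fin n` and `E(S,T) = {(u,v) ∈ E : u ∈ S, v ∈ T}`. -/
noncomputable def rhoDir {n : ℕ} (E : Finset (Fin n × Fin n))
    (S T : Finset (Fin n)) : ℝ :=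
  ((E.filter fun p => p.1 ∈ S ∧ p.2 ∈ T).card : ℝ) /
    Real.sqrt ((S.card : ℝ) * (T.card : ℝ))

/-- The number of edges of the bipartite graph `G_t` (one undirected edge `{u^L, v^R}`
for each directed edge `(u,v) ∈ E`) with both endpoints in `U ⊆ V^L ⊔ V^R`. -/
noncomputable def gtEdges {n : ℕ} (E : Finset (Fin n × Fin n))
    (U : Finset (Fin n ⊕ Fin n)) : ℕ :=
  (E.filter fun p => Sum.inl p.1 ∈ U ∧ Sum.inr p.2 ∈ U).card

/-- The total node weight of `U ⊆ V^L ⊔ V^R` in `G_t`: vertices of `V^L` have weight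
`1/(2t)` and vertices of `V^R` have weight `t/2`. -/
noncomputable def gtWeight {n : ℕ} (t : ℝ) (U : Finset (Fin n ⊕ Fin n)) : ℝ :=
  ∑ z ∈ U, Sum.elim (fun _ => 1 / (2 * t)) (fun _ => t / 2) z

/-- The node-weighted density of `U` in the bipartite graph `G_t`. -/
noncomputable def rhoGt {n : ℕ} (E : Finset (Fin n × Fin n)) (t : ℝ)
    (U : Finset (Fin n ⊕ Fin n)) : ℝ :=
  (gtEdges E U : ℝ) / gtWeight t U

/-! The edges of `G_t` inside `S^L ∪ T^R` are exactly the edges `E(S,T)`, while the weight of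
`S^L ∪ T^R` is `|S|/(2t) + t|T|/2`, which by AM-GM is at least `√(|S|·|T|)`. -/

theorem Real.sqrt_mul_le_div_add_mul {a b t : ℝ} (ha : 0 ≤ a) (hb : 0 ≤ b) (ht : 0 < t) :
    √(a * b) ≤ a * (1 / (2 * t)) + b * (t / 2) := by
  have hab : a * b = 4 * (a * (1 / (2 * t))) * (b * (t / 2)) := by
    field_simp
    ring
  rw [Real.sqrt_le_left (by positivity), hab]
  exact four_mul_le_sq_add _ _

section

variable {n : ℕ}

theorem gtEdges_map_inl_union_map_inr (E : Finset (Fin n × Fin n)) (S T : Finset (Fin n)) :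
    gtEdges E (S.map ⟨Sum.inl, Sum.inl_injective⟩ ∪ T.map ⟨Sum.inr, Sum.inr_injective⟩) =
      (E.filter fun p => p.1 ∈ S ∧ p.2 ∈ T).card := by
  simp [gtEdges]

theorem gtWeight_map_inl_union_map_inr (t : ℝ) (S T : Finset (Fin n)) :
    gtWeight t (S.map ⟨Sum.inl, Sum.inl_injective⟩ ∪ T.map ⟨Sum.inr, Sum.inr_injective⟩) =
      S.card * (1 / (2 * t)) + T.card * (t / 2) := by
  simp [gtWeight, Finset.sum_union, Finset.disjoint_left]

end

/-- **The reduction of Sawlani and Wang, first direction.** For any nonempty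
`S, T ⊆ V` and any `t > 0`, the directed density of `(S,T)` in `G` is at least the
node-weighted density of `S^L ∪ T^R` in `G_t`. -/
theorem directed_density_ge_reduction {n : ℕ} (E : Finset (Fin n × Fin n))
    (S T : Finset (Fin n)) (hS : S.Nonempty) (hT : T.Nonempty)
    (t : ℝ) (ht : 0 < t) :
    rhoGt E t
        (S.map ⟨Sum.inl, Sum.inl_injective⟩ ∪ T.map ⟨Sum.inr, Sum.inr_injective⟩) ≤
      rhoDir E S T := by
  have hST : (0 : ℝ) < S.card * T.card := by
    have := hS.card_pos
    have := hT.card_pos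
    positivity
  rw [rhoGt, rhoDir, gtEdges_map_inl_union_map_inr, gtWeight_map_inl_union_map_inr]
  exact div_le_div_of_nonneg_left (Nat.cast_nonneg _) (Real.sqrt_pos.mpr hST)
    (Real.sqrt_mul_le_div_add_mul (Nat.cast_nonneg _) (Nat.cast_nonneg _) ht)
end
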